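/- arXiv:2010.11799 — 8 statements merged into one kernel-verified Lean document; each statement's English description precedes it below -/
import Mathlib

section
/- Let 𝒜 ⊆ 𝒞 be an additive subcategory which is closed under extensions and satisfies 𝒞(a, Σ^{-1} b) = 0 for all a, b ∈ 𝒜. Then each short triangle a' →^{α'} a →^{α} a'' with a', a, a'' ∈ 𝒜 is a kernel–cokernel pair in 𝒜: α' is a kernel of α in the category 𝒜 and α is a cokernel of α' in the category 𝒜. -/
/-!
Common setup: `k` is a field, `C` an essentially small `k`-linear Hom-finite
triangulated category with split idempotents; `Σ` (suspension) is the shift by `1`.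
-/

open CategoryTheory CategoryTheory.Limits CategoryTheory.Pretriangulated

universe v u

variable {C : Type u} [Category.{v} C] [Preadditive C] [HasZeroObject C]
  [HasShift C ℤ] [∀ n : ℤ, (shiftFunctor C n).Additive] [Pretriangulated C]
  [HasBinaryBiproducts C]

/-- `c' ⟶ c ⟶ c''` is a *short triangle* if it fits into a distinguished triangle
`c' ⟶ c ⟶ c'' ⟶ Σ c'`. -/
def ShortTri {a b c : C} (f : a ⟶ b) (g : b ⟶ c) : Prop :=
  ∃ h : c ⟶ a⟦(1 : ℤ)⟧, Triangle.mk f g h ∈ distTriang C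

/-- The extension closure `⟨S⟩` of a set of objects `S`: the smallest full subcategory
(i.e. predicate on objects) containing `S` and closed under isomorphisms, finite direct
sums and extensions. -/
inductive ExtClos (S : Set C) : C → Prop
  | of {s : C} (hs : s ∈ S) : ExtClos S s
  | zero {z : C} (hz : IsZero z) : ExtClos S z
  | sum {x y : C} (hx : ExtClos S x) (hy : ExtClos S y) : ExtClos S (x ⊞ y)
  | iso {x y : C} (e : x ≅ y) (hx : ExtClos S x) : ExtClos S y
  | ext {a e b : C} (f : a ⟶ e) (g : e ⟶ b) (hT : ShortTri f g)
      (ha : ExtClos S a) (hb : ExtClos S b) : ExtClos S e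

/-- A *`w`-orthogonal collection*: a finite set `S` of objects such that each
`End(s)` is a skew field, `Hom(s,t) = 0` for distinct `s t ∈ S`, and
`Hom(s, Σ^ℓ t) = 0` for `ℓ ∈ {-w+1, …, -1}`. -/
structure IsOrthogonalCollection (w : ℤ) (S : Set C) : Prop where
  finite : S.Finite
  id_ne_zero : ∀ s ∈ S, (𝟙 s : s ⟶ s) ≠ 0
  isIso_of_ne_zero : ∀ s ∈ S, ∀ f : s ⟶ s, f ≠ 0 → IsIso f
  hom_eq_zero : ∀ s ∈ S, ∀ t ∈ S, s ≠ t → ∀ f : s ⟶ t, f = 0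
  shift_hom_eq_zero : ∀ s ∈ S, ∀ t ∈ S, ∀ ℓ : ℤ, 1 - w ≤ ℓ → ℓ ≤ -1 → ∀ f : s ⟶ t⟦ℓ⟧, f = 0

/-- `(f, g)` is a kernel–cokernel pair: `f` is a kernel of `g` and `g` is a cokernel
of `f`.  In an abelian category these are exactly the short exact sequences. -/
def IsKernelCokernelPair {A : Type*} [Category A] [Limits.HasZeroMorphisms A]
    {x y z : A} (f : x ⟶ y) (g : y ⟶ z) : Prop :=
  ∃ w : f ≫ g = 0, Nonempty (IsLimit (KernelFork.ofι f w)) ∧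
    Nonempty (IsColimit (CokernelCofork.ofπ g w))

/-- An additive subcategory (as a predicate on objects): closed under isomorphisms,
finite direct sums and direct summands. -/
structure IsAdditiveSubcat (P : C → Prop) : Prop where
  iso_closed : ∀ {x y : C}, (x ≅ y) → P x → P y
  sum_closed : ∀ {x y : C}, P x → P y → P (x ⊞ y)
  summand_closed : ∀ {x y : C}, P (x ⊞ y) → P x ∧ P y

/-- `P` is a *proper abelian subcategory* of `C`: an additive subcategory which is
abelian and whose short exact sequences (= kernel–cokernel pairs) are precisely the
short triangles of `C` with all terms in `P`. -/
structure IsProperAbelianSub (P : C → Prop) : Prop where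
  additive : IsAdditiveSubcat P
  abelian : Nonempty (Abelian (ObjectProperty.FullSubcategory P))
  ses_iff_shortTri : ∀ (x y z : ObjectProperty.FullSubcategory P) (f : x ⟶ y) (g : y ⟶ z),
    IsKernelCokernelPair f g ↔ ShortTri (show x.obj ⟶ y.obj from f.hom) (show y.obj ⟶ z.obj from g.hom)

/-- Finite length object in a category with zero morphisms: built from the zero object
by finitely many short exact sequences (kernel–cokernel pairs) with simple top. -/
inductive IsFinLength {A : Type*} [Category A] [Limits.HasZeroMorphisms A] : A → Prop
  | of_isZero {x : A} (h : IsZero x) : IsFinLength x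
  | step {a x s : A} (f : a ⟶ x) (g : x ⟶ s) (hs : Simple s)
      (hkc : IsKernelCokernelPair f g) (ha : IsFinLength a) : IsFinLength x

/-- An `X`-preenvelope of `c`. -/
def IsPreenvelope (X : C → Prop) {c e : C} (γ : c ⟶ e) : Prop :=
  X e ∧ ∀ e' : C, X e' → ∀ f : c ⟶ e', ∃ φ : e ⟶ e', γ ≫ φ = f

/-- An `X`-envelope of `c`: a left minimal `X`-preenvelope. -/
def IsEnvelope (X : C → Prop) {c e : C} (γ : c ⟶ e) : Prop :=
  IsPreenvelope X γ ∧ ∀ φ : e ⟶ e, γ ≫ φ = γ → IsIso φ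

/-- An `X`-precover of `c`. -/
def IsPrecover (X : C → Prop) {x c : C} (τ : x ⟶ c) : Prop :=
  X x ∧ ∀ x' : C, X x' → ∀ f : x' ⟶ c, ∃ φ : x' ⟶ x, φ ≫ τ = f

/-- An `X`-cover of `c`: a right minimal `X`-precover. -/
def IsCover (X : C → Prop) {x c : C} (τ : x ⟶ c) : Prop :=
  IsPrecover X τ ∧ ∀ φ : x ⟶ x, φ ≫ τ = τ → IsIso φ

/-- `Σ^n P`: the closure under isomorphism of the image of `P` under the `n`-th shift. -/
def ShiftClos (n : ℤ) (P : C → Prop) : C → Prop :=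
  fun y => ∃ x : C, P x ∧ Nonempty (y ≅ x⟦n⟧)

/-- The star product `P * Q` of two classes of objects. -/
def StarProd (P Q : C → Prop) : C → Prop :=
  fun e => ∃ (a b : C) (f : a ⟶ e) (g : e ⟶ b), P a ∧ Q b ∧ ShortTri f g

/-- `SpanFiltration S n = ⟨S⟩ * Σ^{-1}⟨S⟩ * ⋯ * Σ^{-n}⟨S⟩`. -/
def SpanFiltration (S : Set C) : ℕ → C → Prop
  | 0 => ExtClos S
  | n + 1 => StarProd (SpanFiltration S n) (ShiftClos (-(n + 1 : ℤ)) (ExtClos S))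

/-- A *`w`-simple minded system*: a `w`-orthogonal collection `S` with
`C = ⟨S⟩ * Σ^{-1}⟨S⟩ * ⋯ * Σ^{-w+1}⟨S⟩`. -/
def IsSimpleMindedSystem (w : ℕ) (S : Set C) : Prop :=
  IsOrthogonalCollection (w : ℤ) S ∧ ∀ c : C, SpanFiltration S (w - 1) c

/-- A torsion pair `(T, F)` in the (proper abelian) subcategory given by `P`;
short exact sequences in `P` are the short triangles with all terms in `P`. -/
structure IsTorsionPair (P T F : C → Prop) : Prop where
  t_sub : ∀ x, T x → P x
  f_sub : ∀ x, F x → P x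
  t_iso : ∀ {x y : C}, (x ≅ y) → T x → T y
  f_iso : ∀ {x y : C}, (x ≅ y) → F x → F y
  hom_zero : ∀ t f, T t → F f → ∀ φ : t ⟶ f, φ = 0
  exists_seq : ∀ a, P a → ∃ (t f : C) (i : t ⟶ a) (p : a ⟶ f), T t ∧ F f ∧ ShortTri i p

/-- `T` is closed under subobjects in the subcategory given by `P`. -/
def ClosedUnderSubobjects (P T : C → Prop) : Prop :=
  ∀ (x y : ObjectProperty.FullSubcategory P) (f : x ⟶ y), Mono f → T y.obj → T x.obj

/-- `T` is closed under quotient objects in the subcategory given by `P`. -/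
def ClosedUnderQuotients (P T : C → Prop) : Prop :=
  ∀ (x y : ObjectProperty.FullSubcategory P) (f : x ⟶ y), Epi f → T x.obj → T y.obj

/-- `t` is a left tilt of `s` at `S'`: `t = Σ^{-1} s` for `s ∈ S'`, and otherwise `t` is
the cone of a `(Σ^{-1}⟨S'⟩)`-cover `τ : Σ^{-1}t_s ⟶ s`. -/
def LeftTiltPair (S' : Set C) (s t : C) : Prop :=
  (s ∈ S' ∧ t = s⟦(-1 : ℤ)⟧) ∨
  (s ∉ S' ∧ ∃ (u : C) (τ : u ⟶ s) (g : s ⟶ t) (h : t ⟶ u⟦(1 : ℤ)⟧),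
      IsCover (ShiftClos (-1) (ExtClos S')) τ ∧ Triangle.mk τ g h ∈ distTriang C)

/-- `L` realises the left tilt `L_{S'}(S)` of `S` at `S' ⊆ S`. -/
def IsLeftTilt (S' S : Set C) (L : C → C) : Prop := ∀ s ∈ S, LeftTiltPair S' s (L s)

/-- `t` is a right tilt of `s` at `S''`: `t = Σ s` for `s ∈ S''`, and otherwise there is
a distinguished triangle `g_s ⟶ t ⟶ s ⟶ Σ g_s` whose third map is a `(Σ⟨S''⟩)`-envelope. -/
def RightTiltPair (S'' : Set C) (s t : C) : Prop :=
  (s ∈ S'' ∧ t = s⟦(1 : ℤ)⟧) ∨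
  (s ∉ S'' ∧ ∃ (g : C) (a : g ⟶ t) (b : t ⟶ s) (γ : s ⟶ g⟦(1 : ℤ)⟧),
      IsEnvelope (ShiftClos 1 (ExtClos S'')) γ ∧ Triangle.mk a b γ ∈ distTriang C)

/-- `R` realises the right tilt `R_{S''}(S)` of `S` at `S'' ⊆ S`. -/
def IsRightTilt (S'' S : Set C) (R : C → C) : Prop := ∀ s ∈ S, RightTiltPair S'' s (R s)

/-- `C` is `(-w)`-Calabi--Yau: `Σ^{-w}` is a Serre functor, i.e. there are isomorphisms
`C(x, Σ^{-w} y) ≅ D C(y, x)` natural in `x` and `y`. -/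
def IsNegativeCalabiYau (k : Type) [Field k] (C : Type u) [Category.{v} C] [Preadditive C]
    [Linear k C] [HasShift C ℤ] (w : ℤ) : Prop :=
  ∃ η : ∀ x y : C, (x ⟶ y⟦(-w : ℤ)⟧) ≃ₗ[k] ((y ⟶ x) →ₗ[k] k),
    (∀ (x x' y : C) (f : x ⟶ x') (α : x' ⟶ y⟦(-w : ℤ)⟧) (g : y ⟶ x),
      η x y (f ≫ α) g = η x' y α (g ≫ f)) ∧
    (∀ (x y y' : C) (u : y ⟶ y') (α : x ⟶ y⟦(-w : ℤ)⟧) (g : y' ⟶ x),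
      η x y' (α ≫ (shiftFunctor C (-w : ℤ)).map u) g = η x y α (u ≫ g))

/-!
A distinguished triangle `a' ⟶ a ⟶ a'' ⟶ Σ a'` makes `a'` a weak kernel and `a''` a weak
cokernel, via the long exact Hom sequences. The maps that could spoil uniqueness factor through
`Σ⁻¹ a'' ⟶ a'` resp. `a'' ⟶ Σ a'`, so they vanish on `𝒜` once `𝒜(-, Σ⁻¹ -) = 0`: then `α'` is a
monomorphism and `α` an epimorphism in `𝒜`, and the weak kernel and cokernel are genuine ones.
-/

namespace CategoryTheory.Pretriangulated

lemma shift_one_hom_eq_zero {D : Type*} [Category D] [HasZeroMorphisms D] [HasShift D ℤ]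
    {X W : D} (h : ∀ v : X ⟶ W⟦(-1 : ℤ)⟧, v = 0) (g : X⟦(1 : ℤ)⟧ ⟶ W) : g = 0 := by
  apply ((shiftEquiv D (1 : ℤ)).toAdjunction.homEquiv X W).injective
  exact (h _).trans (h _).symm

variable {D : Type*} [Category D] [Preadditive D] [HasZeroObject D] [HasShift D ℤ]
  [∀ n : ℤ, (shiftFunctor D n).Additive] [Pretriangulated D]

section

variable {T : Triangle D} (hT : T ∈ distTriang D)
include hT

lemma eq_zero_of_comp_mor₁_eq_zero {W : D} (hW : ∀ v : W ⟶ T.obj₃⟦(-1 : ℤ)⟧, v = 0)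
    (u : W ⟶ T.obj₁) (hu : u ≫ T.mor₁ = 0) : u = 0 := by
  obtain ⟨v, rfl⟩ := Triangle.coyoneda_exact₂ _ (inv_rot_of_distTriang _ hT) u hu
  have hv : v = 0 := hW v
  rw [hv]
  exact zero_comp

lemma eq_zero_of_mor₂_comp_eq_zero {W : D} (hW : ∀ v : T.obj₁ ⟶ W⟦(-1 : ℤ)⟧, v = 0)
    (u : T.obj₃ ⟶ W) (hu : T.mor₂ ≫ u = 0) : u = 0 := by
  obtain ⟨v, rfl⟩ := Triangle.yoneda_exact₃ _ hT u hu
  rw [shift_one_hom_eq_zero hW v, comp_zero]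

end

variable {P : ObjectProperty D} {x y z : P.FullSubcategory} {f : x ⟶ y} {g : y ⟶ z}
  {h : z.obj ⟶ x.obj⟦(1 : ℤ)⟧} (hT : Triangle.mk f.hom g.hom h ∈ distTriang D)
include hT

lemma mono_of_distTriang (hz : ∀ w : P.FullSubcategory, ∀ v : w.obj ⟶ z.obj⟦(-1 : ℤ)⟧, v = 0) :
    Mono f :=
  Preadditive.mono_of_cancel_zero f fun u hu =>
    ObjectProperty.hom_ext _ (eq_zero_of_comp_mor₁_eq_zero hT (hz _) u.hom
      (congrArg InducedCategory.Hom.hom hu))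

lemma epi_of_distTriang (hx : ∀ w : P.FullSubcategory, ∀ v : x.obj ⟶ w.obj⟦(-1 : ℤ)⟧, v = 0) :
    Epi g :=
  Preadditive.epi_of_cancel_zero g fun u hu =>
    ObjectProperty.hom_ext _ (eq_zero_of_mor₂_comp_eq_zero hT (hx _) u.hom
      (congrArg InducedCategory.Hom.hom hu))

lemma isKernelCokernelPair_of_distTriang
    (hx : ∀ w : P.FullSubcategory, ∀ v : x.obj ⟶ w.obj⟦(-1 : ℤ)⟧, v = 0)
    (hz : ∀ w : P.FullSubcategory, ∀ v : w.obj ⟶ z.obj⟦(-1 : ℤ)⟧, v = 0) :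
    IsKernelCokernelPair f g := by
  have hfg : f ≫ g = 0 := ObjectProperty.hom_ext _ (comp_distTriang_mor_zero₁₂ _ hT)
  have := mono_of_distTriang hT hz
  have := epi_of_distTriang hT hx
  refine ⟨hfg, ⟨KernelFork.IsLimit.ofι' f hfg fun u hu => ?_⟩,
    ⟨CokernelCofork.IsColimit.ofπ' g hfg fun u hu => ?_⟩⟩
  · have hlift := Triangle.coyoneda_exact₂ _ hT u.hom (congrArg InducedCategory.Hom.hom hu)
    exact ⟨ObjectProperty.homMk hlift.choose, ObjectProperty.hom_ext _ hlift.choose_spec.symm⟩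
  · have hdesc := Triangle.yoneda_exact₂ _ hT u.hom (congrArg InducedCategory.Hom.hom hu)
    exact ⟨ObjectProperty.homMk hdesc.choose, ObjectProperty.hom_ext _ hdesc.choose_spec.symm⟩

end CategoryTheory.Pretriangulated

/-- Dyer. Let `𝒜 ⊆ C` be an additive subcategory closed under
extensions with `C(a, Σ⁻¹ b) = 0` for all `a, b ∈ 𝒜`.  Then each short triangle
`a' ⟶ a ⟶ a''` with all terms in `𝒜` is a kernel–cokernel pair in `𝒜`. -/
theorem statement4 {k : Type} [Field k] [Linear k C]
    [EssentiallySmall.{v} C] [IsIdempotentComplete C]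
    [∀ x y : C, FiniteDimensional k (x ⟶ y)]
    (P : C → Prop) (hadd : IsAdditiveSubcat P)
    (hext : ∀ {a e b : C} (f : a ⟶ e) (g : e ⟶ b), ShortTri f g → P a → P b → P e)
    (hneg : ∀ a b : C, P a → P b → ∀ f : a ⟶ b⟦(-1 : ℤ)⟧, f = 0)
    (x y z : ObjectProperty.FullSubcategory P) (f : x ⟶ y) (g : y ⟶ z)
    (hT : ShortTri (show x.obj ⟶ y.obj from f.hom) (show y.obj ⟶ z.obj from g.hom)) :
    IsKernelCokernelPair f g := by
  obtain ⟨h, hT⟩ := hT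
  exact isKernelCokernelPair_of_distTriang hT (fun w => hneg _ _ x.property w.property)
    (fun w => hneg _ _ w.property z.property)
end

section
/- Let 𝒜 ⊆ 𝒞 be an additive subcategory which is closed under extensions and satisfies 𝒞(a, Σ^{-1} b) = 0 for all a, b ∈ 𝒜. Let a →^{α} x, a →^{φ} a', a' →^{α'} x', x →^{φ'} x' be a commutative square in 𝒞 with all four objects a, x, a', x' in 𝒜, which is homotopy cartesian, i.e. a →^{(φ,α)} a' ⊕ x →^{(-α', φ')} x' is a short triangle. Then this square is both a pullback square and a pushout square in the category 𝒜. -/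
/-!
Common setup: `k` is a field, `C` an essentially small `k`-linear Hom-finite
triangulated category with split idempotents; `Σ` (suspension) is the shift by `1`.
-/

open CategoryTheory CategoryTheory.Limits CategoryTheory.Pretriangulated

universe v u

variable {C : Type u} [Category.{v} C] [Preadditive C] [HasZeroObject C]
  [HasShift C ℤ] [∀ n : ℤ, (shiftFunctor C n).Additive] [Pretriangulated C]
  [HasBinaryBiproducts C]

/-!
Applying `Hom(t, -)` and `Hom(-, t)` to the triangle `a → a' ⊕ x → x' → Σa` shows that, for any
`t`, every commutative square over the cospan lifts through `a` and every square under the span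
descends through `x'`. Two lifts differ by a map factoring through `Σ⁻¹x' → a`, and two
descents by a map factoring through `x' → Σa`. For `t ∈ 𝒜` both factorizations vanish: maps
`t → Σ⁻¹x'` are zero by hypothesis, and maps `Σa → t` correspond to maps `a → Σ⁻¹t`.
-/

theorem CategoryTheory.IsPullback.of_exists_lift {D : Type*} [Category D] {W X Y Z : D}
    {fst : W ⟶ X} {snd : W ⟶ Y} {f : X ⟶ Z} {g : Y ⟶ Z} (w : fst ≫ f = snd ≫ g)
    (hlift : ∀ {T : D} (u : T ⟶ X) (v : T ⟶ Y), u ≫ f = v ≫ g →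
      ∃ l : T ⟶ W, l ≫ fst = u ∧ l ≫ snd = v)
    (hext : ∀ {T : D} (l₁ l₂ : T ⟶ W), l₁ ≫ fst = l₂ ≫ fst → l₁ ≫ snd = l₂ ≫ snd → l₁ = l₂) :
    IsPullback fst snd f g := by
  choose lift hlift_fst hlift_snd using @hlift
  refine .of_isLimit (PullbackCone.IsLimit.mk w (fun s => lift s.fst s.snd s.condition)
    (fun s => hlift_fst ..) (fun s => hlift_snd ..) fun s m hm_fst hm_snd => ?_)
  exact hext _ _ (hm_fst.trans (hlift_fst ..).symm) (hm_snd.trans (hlift_snd ..).symm)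

theorem CategoryTheory.IsPushout.of_exists_desc {D : Type*} [Category D] {W X Y Z : D}
    {f : W ⟶ X} {g : W ⟶ Y} {inl : X ⟶ Z} {inr : Y ⟶ Z} (w : f ≫ inl = g ≫ inr)
    (hdesc : ∀ {T : D} (u : X ⟶ T) (v : Y ⟶ T), f ≫ u = g ≫ v →
      ∃ l : Z ⟶ T, inl ≫ l = u ∧ inr ≫ l = v)
    (hext : ∀ {T : D} (l₁ l₂ : Z ⟶ T), inl ≫ l₁ = inl ≫ l₂ → inr ≫ l₁ = inr ≫ l₂ → l₁ = l₂) :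
    IsPushout f g inl inr := by
  choose desc hdesc_inl hdesc_inr using @hdesc
  refine .of_isColimit (PushoutCocone.IsColimit.mk w (fun s => desc s.inl s.inr s.condition)
    (fun s => hdesc_inl ..) (fun s => hdesc_inr ..) fun s m hm_inl hm_inr => ?_)
  exact hext _ _ (hm_inl.trans (hdesc_inl ..).symm) (hm_inr.trans (hdesc_inr ..).symm)

theorem eq_zero_of_forall_hom_shift_neg_one_eq_zero {D : Type*} [Category D] [Preadditive D]
    [HasShift D ℤ] [∀ n : ℤ, (shiftFunctor D n).Additive] {a t : D}
    (h : ∀ f : a ⟶ t⟦(-1 : ℤ)⟧, f = 0) (g : a⟦(1 : ℤ)⟧ ⟶ t) : g = 0 := by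
  rw [← (shiftFunctor D (-1 : ℤ)).map_eq_zero_iff]
  simpa using h ((shiftFunctorCompIsoId D (1 : ℤ) (-1) (by simp)).inv.app a ≫ g⟦(-1 : ℤ)⟧')

namespace ShortTri

variable {a b c : C} {f : a ⟶ b} {g : b ⟶ c}

omit [HasBinaryBiproducts C]

theorem exists_eq_comp_left (h : ShortTri f g) {t : C} (u : t ⟶ b) (hu : u ≫ g = 0) :
    ∃ l : t ⟶ a, u = l ≫ f := by
  obtain ⟨θ, hθ⟩ := h
  exact Triangle.coyoneda_exact₂ _ hθ u hu

theorem exists_eq_comp_right (h : ShortTri f g) {t : C} (u : b ⟶ t) (hu : f ≫ u = 0) :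
    ∃ l : c ⟶ t, u = g ≫ l := by
  obtain ⟨θ, hθ⟩ := h
  exact Triangle.yoneda_exact₂ _ hθ u hu

theorem eq_zero_of_comp_left_eq_zero (h : ShortTri f g) {t : C}
    (hzero : ∀ k : t ⟶ c⟦(-1 : ℤ)⟧, k = 0) (l : t ⟶ a) (hl : l ≫ f = 0) : l = 0 := by
  obtain ⟨θ, hθ⟩ := h
  obtain ⟨k, hk⟩ : ∃ k : t ⟶ c⟦(-1 : ℤ)⟧, l = k ≫ _ :=
    Triangle.coyoneda_exact₂ _ (inv_rot_of_distTriang _ hθ) l hl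
  rw [hk, hzero k]
  exact zero_comp

theorem eq_zero_of_comp_right_eq_zero (h : ShortTri f g) {t : C}
    (hzero : ∀ k : a⟦(1 : ℤ)⟧ ⟶ t, k = 0) (m : c ⟶ t) (hm : g ≫ m = 0) : m = 0 := by
  obtain ⟨θ, hθ⟩ := h
  obtain ⟨k, hk⟩ : ∃ k : a⟦(1 : ℤ)⟧ ⟶ t, m = θ ≫ k := Triangle.yoneda_exact₃ _ hθ m hm
  rw [hk, hzero k, comp_zero]

end ShortTri

section HomotopyCartesian

variable {a x a' x' : C} {α : a ⟶ x} {φ : a ⟶ a'} {α' : a' ⟶ x'} {φ' : x ⟶ x'}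

theorem ShortTri.exists_lift (h : ShortTri (biprod.lift φ α) (biprod.desc (-α') φ')) {t : C}
    (u : t ⟶ x) (v : t ⟶ a') (huv : u ≫ φ' = v ≫ α') :
    ∃ l : t ⟶ a, l ≫ α = u ∧ l ≫ φ = v := by
  obtain ⟨l, hl⟩ := h.exists_eq_comp_left (biprod.lift v u) (by simp [huv])
  exact ⟨l, by simpa using (congrArg (· ≫ biprod.snd) hl).symm,
    by simpa using (congrArg (· ≫ biprod.fst) hl).symm⟩

theorem ShortTri.exists_desc (h : ShortTri (biprod.lift φ α) (biprod.desc (-α') φ')) {t : C}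
    (u : x ⟶ t) (v : a' ⟶ t) (huv : α ≫ u = φ ≫ v) :
    ∃ l : x' ⟶ t, φ' ≫ l = u ∧ α' ≫ l = v := by
  obtain ⟨l, hl⟩ := h.exists_eq_comp_right (biprod.desc (-v) u) (by simp [huv])
  exact ⟨l, by simpa using (congrArg (biprod.inr ≫ ·) hl).symm,
    by simpa using (congrArg (biprod.inl ≫ ·) hl).symm⟩

theorem ShortTri.lift_ext (h : ShortTri (biprod.lift φ α) (biprod.desc (-α') φ')) {t : C}
    (hzero : ∀ k : t ⟶ x'⟦(-1 : ℤ)⟧, k = 0) {l₁ l₂ : t ⟶ a}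
    (hα : l₁ ≫ α = l₂ ≫ α) (hφ : l₁ ≫ φ = l₂ ≫ φ) : l₁ = l₂ :=
  sub_eq_zero.mp <| h.eq_zero_of_comp_left_eq_zero hzero _ (by ext <;> simp [hα, hφ])

theorem ShortTri.desc_ext (h : ShortTri (biprod.lift φ α) (biprod.desc (-α') φ')) {t : C}
    (hzero : ∀ k : a⟦(1 : ℤ)⟧ ⟶ t, k = 0) {l₁ l₂ : x' ⟶ t}
    (hφ' : φ' ≫ l₁ = φ' ≫ l₂) (hα' : α' ≫ l₁ = α' ≫ l₂) : l₁ = l₂ :=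
  sub_eq_zero.mp <| h.eq_zero_of_comp_right_eq_zero hzero _ (by ext <;> simp [hφ', hα'])

end HomotopyCartesian

/-- Let `𝒜 ⊆ C` be an additive subcategory closed under extensions
with `C(a, Σ⁻¹ b) = 0` for all `a, b ∈ 𝒜`.  A commutative square with all four corners
in `𝒜` which is homotopy cartesian in `C` is both a pullback square and a pushout
square in `𝒜`. -/
theorem statement5 {k : Type} [Field k] [Linear k C]
    [EssentiallySmall.{v} C] [IsIdempotentComplete C]
    [∀ x y : C, FiniteDimensional k (x ⟶ y)]
    (P : C → Prop) (hadd : IsAdditiveSubcat P)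
    (hext : ∀ {a e b : C} (f : a ⟶ e) (g : e ⟶ b), ShortTri f g → P a → P b → P e)
    (hneg : ∀ a b : C, P a → P b → ∀ f : a ⟶ b⟦(-1 : ℤ)⟧, f = 0)
    (a x a' x' : C) (ha : P a) (hx : P x) (ha' : P a') (hx' : P x')
    (α : a ⟶ x) (φ : a ⟶ a') (α' : a' ⟶ x') (φ' : x ⟶ x')
    (hcomm : α ≫ φ' = φ ≫ α')
    (hhc : ShortTri (biprod.lift φ α) (biprod.desc (-α') φ')) :
    IsPullback (show (⟨a, ha⟩ : ObjectProperty.FullSubcategory P) ⟶ ⟨x, hx⟩ from ObjectProperty.homMk α)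
        (show (⟨a, ha⟩ : ObjectProperty.FullSubcategory P) ⟶ ⟨a', ha'⟩ from ObjectProperty.homMk φ)
        (show (⟨x, hx⟩ : ObjectProperty.FullSubcategory P) ⟶ ⟨x', hx'⟩ from ObjectProperty.homMk φ')
        (show (⟨a', ha'⟩ : ObjectProperty.FullSubcategory P) ⟶ ⟨x', hx'⟩ from ObjectProperty.homMk α') ∧
    IsPushout (show (⟨a, ha⟩ : ObjectProperty.FullSubcategory P) ⟶ ⟨x, hx⟩ from ObjectProperty.homMk α)
        (show (⟨a, ha⟩ : ObjectProperty.FullSubcategory P) ⟶ ⟨a', ha'⟩ from ObjectProperty.homMk φ)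
        (show (⟨x, hx⟩ : ObjectProperty.FullSubcategory P) ⟶ ⟨x', hx'⟩ from ObjectProperty.homMk φ')
        (show (⟨a', ha'⟩ : ObjectProperty.FullSubcategory P) ⟶ ⟨x', hx'⟩ from ObjectProperty.homMk α') := by
  refine ⟨.of_exists_lift (ObjectProperty.hom_ext _ hcomm) (fun u v huv => ?_)
      (fun {T} l₁ l₂ hα hφ => ObjectProperty.hom_ext _ ?_),
    .of_exists_desc (ObjectProperty.hom_ext _ hcomm) (fun u v huv => ?_)
      (fun {T} l₁ l₂ hφ' hα' => ObjectProperty.hom_ext _ ?_)⟩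
  · obtain ⟨l, hlα, hlφ⟩ := hhc.exists_lift u.hom v.hom (congrArg (·.hom) huv)
    exact ⟨ObjectProperty.homMk l, ObjectProperty.hom_ext _ hlα, ObjectProperty.hom_ext _ hlφ⟩
  · exact hhc.lift_ext (hneg _ _ T.property hx') (congrArg (·.hom) hα) (congrArg (·.hom) hφ)
  · obtain ⟨l, hlφ', hlα'⟩ := hhc.exists_desc u.hom v.hom (congrArg (·.hom) huv)
    exact ⟨ObjectProperty.homMk l, ObjectProperty.hom_ext _ hlφ', ObjectProperty.hom_ext _ hlα'⟩
  · exact hhc.desc_ext (eq_zero_of_forall_hom_shift_neg_one_eq_zero (hneg _ _ ha T.property))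
      (congrArg (·.hom) hφ') (congrArg (·.hom) hα')
end

section
/- Let 𝒜 ⊆ 𝒞 be an additive subcategory which is closed under extensions and satisfies 𝒞(a, Σ^{-1} b) = 0 for all a, b ∈ 𝒜, and assume 𝒜 * (Σ𝒜) ⊆ (Σ𝒜) * 𝒜. Then every categorical monomorphism α: a^0 → a^1 in 𝒜 (i.e. every morphism in 𝒜 such that 𝒞(x, α): 𝒞(x, a^0) → 𝒞(x, a^1) is injective for every x ∈ 𝒜) is an inflation: the cone c of α, i.e. the object in a distinguished triangle a^0 →^{α} a^1 → c → Σa^0, lies in 𝒜. -/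
/-!
Common setup: `k` is a field, `C` an essentially small `k`-linear Hom-finite
triangulated category with split idempotents; `Σ` (suspension) is the shift by `1`.
-/

open CategoryTheory CategoryTheory.Limits CategoryTheory.Pretriangulated

universe v u

variable {C : Type u} [Category.{v} C] [Preadditive C] [HasZeroObject C]
  [HasShift C ℤ] [∀ n : ℤ, (shiftFunctor C n).Additive] [Pretriangulated C]
  [HasBinaryBiproducts C]

/-!
Rotating the triangle of `α` shows `c ∈ 𝒜 * Σ𝒜 ⊆ Σ𝒜 * 𝒜`, so there is a triangle
`x ⟶ c ⟶ b ⟶ Σx` with `x ∈ Σ𝒜`, `b ∈ 𝒜`. The map `f : x ⟶ c` vanishes: its composite with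
`c ⟶ Σa⁰` becomes zero after `Σα`, hence is zero because `α` is a monomorphism in `𝒜`; so `f`
factors through `a¹ ⟶ c`, and every map `Σa ⟶ a¹` is zero as `𝒞(a, Σ⁻¹a¹) = 0`.
The triangle therefore splits and `c` is a direct summand of `b ∈ 𝒜`.
-/

lemma ShiftClos.hom_eq_zero {C : Type*} [Category C] [HasZeroMorphisms C] [HasShift C ℤ]
    {n : ℤ} {P : C → Prop} {x y : C} (hx : ShiftClos n P x)
    (hy : ∀ a, P a → ∀ f : a ⟶ y⟦-n⟧, f = 0) (f : x ⟶ y) : f = 0 := by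
  obtain ⟨a, ha, ⟨e⟩⟩ := hx
  have hf : e.inv ≫ f = 0 :=
    ((shiftEquiv C n).toAdjunction.homEquiv a y).injective ((hy a ha _).trans (hy a ha _).symm)
  rw [← e.hom_inv_id_assoc f, hf, comp_zero]

lemma ShiftClos.eq_zero_of_comp_shift_map_eq_zero {C : Type*} [Category C] [Preadditive C]
    [HasShift C ℤ] [∀ n : ℤ, (shiftFunctor C n).Additive] {n : ℤ} {P : C → Prop}
    {x a₀ a₁ : C} (hx : ShiftClos n P x) {α : a₀ ⟶ a₁}
    (hα : ∀ a, P a → Function.Injective (fun u : a ⟶ a₀ => u ≫ α))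
    (u : x ⟶ a₀⟦n⟧) (hu : u ≫ α⟦n⟧' = 0) : u = 0 := by
  obtain ⟨a, ha, ⟨e⟩⟩ := hx
  obtain ⟨w, hw⟩ := (shiftFunctor C n).map_surjective (e.inv ≫ u)
  have hwα : w ≫ α = 0 ≫ α := by
    apply (shiftFunctor C n).map_injective
    simp [hw, hu]
  rw [← e.hom_inv_id_assoc u, ← hw, hα a ha hwα, Functor.map_zero, comp_zero]

lemma IsAdditiveSubcat.of_shortTri_of_eq_zero {P : C → Prop} (hP : IsAdditiveSubcat P)
    {x c b : C} {f : x ⟶ c} {g : c ⟶ b} (hT : ShortTri f g) (hf : f = 0) (hb : P b) : P c := by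
  obtain ⟨h, hT⟩ := hT
  obtain ⟨e, -, -⟩ := exists_iso_binaryBiproduct_of_distTriang _ (rot_of_distTriang _ hT)
    (show -f⟦(1 : ℤ)⟧' = 0 by rw [hf, Functor.map_zero, neg_zero])
  exact (hP.summand_closed (hP.iso_closed e hb)).1

/-- Let `𝒜 ⊆ C` be an additive subcategory closed under extensions
with `C(a, Σ⁻¹ b) = 0` for all `a, b ∈ 𝒜`, and assume `𝒜 * (Σ𝒜) ⊆ (Σ𝒜) * 𝒜`.  Then
every categorical monomorphism `α : a⁰ ⟶ a¹` in `𝒜` is an inflation: the cone of `α`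
lies in `𝒜`. -/
theorem statement6 {k : Type} [Field k] [Linear k C]
    [EssentiallySmall.{v} C] [IsIdempotentComplete C]
    [∀ x y : C, FiniteDimensional k (x ⟶ y)]
    (P : C → Prop) (hadd : IsAdditiveSubcat P)
    (hext : ∀ {a e b : C} (f : a ⟶ e) (g : e ⟶ b), ShortTri f g → P a → P b → P e)
    (hneg : ∀ a b : C, P a → P b → ∀ f : a ⟶ b⟦(-1 : ℤ)⟧, f = 0)
    (hstar : ∀ e : C, StarProd P (ShiftClos 1 P) e → StarProd (ShiftClos 1 P) P e)
    {a0 a1 : C} (h0 : P a0) (h1 : P a1) (α : a0 ⟶ a1)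
    (hmono : ∀ x : C, P x → Function.Injective (fun u : x ⟶ a0 => u ≫ α))
    (c : C) (g : a1 ⟶ c) (h : c ⟶ a0⟦(1 : ℤ)⟧)
    (hdt : Triangle.mk α g h ∈ distTriang C) :
    P c := by
  have hc : StarProd P (ShiftClos 1 P) c :=
    ⟨a1, a0⟦(1 : ℤ)⟧, g, h, h1, ⟨a0, h0, ⟨Iso.refl _⟩⟩, _, rot_of_distTriang _ hdt⟩
  obtain ⟨x, b, f, g', hx, hb, hT⟩ := hstar c hc
  have hfh : f ≫ h = 0 := hx.eq_zero_of_comp_shift_map_eq_zero hmono _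
    (by rw [Category.assoc, show h ≫ α⟦(1 : ℤ)⟧' = 0 from comp_distTriang_mor_zero₃₁ _ hdt,
      comp_zero])
  obtain ⟨v, rfl⟩ : ∃ v : x ⟶ a1, f = v ≫ g :=
    Triangle.coyoneda_exact₂ _ (rot_of_distTriang _ hdt) f hfh
  have hv : v = 0 := hx.hom_eq_zero (fun a ha => hneg a a1 ha h1) v
  exact hadd.of_shortTri_of_eq_zero hT (by rw [hv, zero_comp]) hb
end

section
/- Let 𝒜 ⊆ 𝒞 be an additive subcategory which is closed under extensions and satisfies 𝒞(a, Σ^{-1} b) = 0 for all a, b ∈ 𝒜, and assume that each object of 𝒜 has a (Σ𝒜)-envelope. Then for each object a ∈ 𝒜 there exists a short triangle a' → q → a with a', q ∈ 𝒜 and 𝒞(q, Σ b) = 0 for all b ∈ 𝒜; that is, the exact structure on 𝒜 whose conflations are the short triangles with all terms in 𝒜 has enough projective objects, the projective objects being exactly the p ∈ 𝒜 with 𝒞(p, Σ𝒜) = 0. -/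
/-!
Common setup: `k` is a field, `C` an essentially small `k`-linear Hom-finite
triangulated category with split idempotents; `Σ` (suspension) is the shift by `1`.
-/

open CategoryTheory CategoryTheory.Limits CategoryTheory.Pretriangulated

universe v u

variable {C : Type u} [Category.{v} C] [Preadditive C] [HasZeroObject C]
  [HasShift C ℤ] [∀ n : ℤ, (shiftFunctor C n).Additive] [Pretriangulated C]
  [HasBinaryBiproducts C]

/-- `p` is a projective object for the exact structure on the subcategory given by `P`
whose conflations are the short triangles with all terms in `P`: every conflation
induces a short exact sequence of Hom-groups out of `p`. -/
def IsExactProjective (P : C → Prop) (p : C) : Prop :=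
  P p ∧ ∀ (x' x x'' : C), P x' → P x → P x'' → ∀ (f : x' ⟶ x) (g : x ⟶ x''),
    ShortTri f g →
      Function.Injective (fun u : p ⟶ x' => u ≫ f) ∧
      (∀ v : p ⟶ x, v ≫ g = 0 → ∃ u : p ⟶ x', u ≫ f = v) ∧
      Function.Surjective (fun v : p ⟶ x => v ≫ g)

/-!
Complete a `(Σ𝒜)`-envelope `γ : a ⟶ Σa'` to a triangle `a' ⟶ q ⟶ a ⟶ Σa'`; then `q ∈ 𝒜` by
closure under extensions. Let `h : q ⟶ Σb` with `b ∈ 𝒜`, and complete `u = (a' ⟶ q) ≫ h` to a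
triangle `b ⟶ y ⟶ a' ⟶ Σb`, so `y ∈ 𝒜`. Since `γ ≫ Σu = 0`, `γ` factors through `Σy ⟶ Σa'`, and
as `Σy ∈ Σ𝒜` the factorisation can be taken through `γ` itself; left minimality of `γ` then makes
`Σy ⟶ Σa'` split epi, so `u = 0` (Wakamatsu's lemma). Hence `h` factors through `q ⟶ a`, and
then through `γ`, so `h = 0`. Projectivity of `p` for the short triangles in `𝒜` is equivalent
to `𝒞(p, Σ𝒜) = 0` because `𝒞(p, Σ⁻¹𝒜) = 0` and the Hom-sequence of a triangle is exact.
-/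

section

omit [HasBinaryBiproducts C]

namespace ShortTri

variable {a b c x : C} {f : a ⟶ b} {g : b ⟶ c}

lemma comp_left_injective (hfg : ShortTri f g) (hx : ∀ w : x ⟶ c⟦(-1 : ℤ)⟧, w = 0) :
    Function.Injective (fun u : x ⟶ a => u ≫ f) := by
  obtain ⟨δ, hT⟩ := hfg
  intro u₁ u₂ hu
  have hsub : (u₁ - u₂) ≫ f = 0 := by rw [Preadditive.sub_comp, sub_eq_zero]; exact hu
  obtain ⟨w, hw⟩ := Triangle.coyoneda_exact₂ _ (inv_rot_of_distTriang _ hT) _ hsub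
  have hw0 : w = 0 := hx w
  rw [hw0, zero_comp] at hw
  exact sub_eq_zero.1 hw

lemma exists_comp_eq (hfg : ShortTri f g) (v : x ⟶ b) (hv : v ≫ g = 0) :
    ∃ u : x ⟶ a, u ≫ f = v := by
  obtain ⟨δ, hT⟩ := hfg
  obtain ⟨u, hu⟩ := Triangle.coyoneda_exact₂ _ hT v hv
  exact ⟨u, hu.symm⟩

lemma comp_right_surjective (hfg : ShortTri f g) (hx : ∀ h : x ⟶ a⟦(1 : ℤ)⟧, h = 0) :
    Function.Surjective (fun v : x ⟶ b => v ≫ g) := by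
  obtain ⟨δ, hT⟩ := hfg
  intro w
  obtain ⟨v, hv⟩ := Triangle.coyoneda_exact₃ _ hT w (hx _)
  exact ⟨v, hv.symm⟩

end ShortTri

omit [Preadditive C] [HasZeroObject C] [HasShift C ℤ] [∀ n : ℤ, (shiftFunctor C n).Additive]
  [Pretriangulated C] in
lemma IsEnvelope.comp_iso {X : C → Prop} {c e e' : C} {γ : c ⟶ e} (hγ : IsEnvelope X γ)
    (ι : e ≅ e') (he' : X e') : IsEnvelope X (γ ≫ ι.hom) := by
  obtain ⟨⟨-, hfac⟩, hmin⟩ := hγ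
  refine ⟨⟨he', fun e'' he'' f => ?_⟩, fun φ hφ => ?_⟩
  · obtain ⟨φ, rfl⟩ := hfac e'' he'' f
    exact ⟨ι.inv ≫ φ, by simp⟩
  · have : IsIso (ι.hom ≫ φ ≫ ι.inv) :=
      hmin _ (by rw [← Category.assoc, ← Category.assoc, hφ]; simp)
    have hφ' : φ = ι.inv ≫ (ι.hom ≫ φ ≫ ι.inv) ≫ ι.hom := by simp
    rw [hφ']
    infer_instance

lemma epi_of_left_minimal {D : Type*} [Category D] {c e e' : D} {γ : c ⟶ e}
    (hmin : ∀ φ : e ⟶ e, γ ≫ φ = γ → IsIso φ) (φ : e ⟶ e') (t : e' ⟶ e)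
    (h : γ ≫ φ ≫ t = γ) : Epi t := by
  have := hmin _ h
  exact epi_of_epi φ t

omit [Preadditive C] [HasZeroObject C] [∀ n : ℤ, (shiftFunctor C n).Additive]
  [Pretriangulated C] in
lemma shiftClos_shift {P : C → Prop} {x : C} (n : ℤ) (hx : P x) : ShiftClos n P (x⟦n⟧) :=
  ⟨x, hx, ⟨Iso.refl _⟩⟩

section Wakamatsu

variable {P : C → Prop}
  (hext : ∀ {a e b : C} (f : a ⟶ e) (g : e ⟶ b), ShortTri f g → P a → P b → P e)
include hext

lemma IsEnvelope.eq_zero_of_comp_shift_eq_zero {a a' b : C} {γ : a ⟶ a'⟦(1 : ℤ)⟧}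
    (hγ : IsEnvelope (ShiftClos 1 P) γ) (ha' : P a') (hb : P b) (u : a' ⟶ b⟦(1 : ℤ)⟧)
    (hu : γ ≫ u⟦(1 : ℤ)⟧' = 0) : u = 0 := by
  obtain ⟨y, i, s, hT⟩ := distinguished_cocone_triangle₂ u
  have hy : P y := hext i s ⟨u, hT⟩ hb ha'
  have hT₂ := rot_of_distTriang _ (rot_of_distTriang _ hT)
  obtain ⟨ψ, hψ⟩ := Triangle.coyoneda_exact₁ _ hT₂ γ hu
  obtain ⟨⟨-, hfac⟩, hmin⟩ := hγ
  obtain ⟨φ, rfl⟩ := hfac _ (shiftClos_shift 1 hy) ψ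
  have : Epi (-(s⟦(1 : ℤ)⟧')) :=
    epi_of_left_minimal hmin φ _ (by rw [← Category.assoc]; exact hψ.symm)
  exact Triangle.mor₁_eq_zero_of_epi₃ _ hT₂ this

lemma shift_hom_eq_zero_of_envelope_triangle {a a' q b : C} {f : a' ⟶ q} {g : q ⟶ a}
    {γ : a ⟶ a'⟦(1 : ℤ)⟧} (hγ : IsEnvelope (ShiftClos 1 P) γ)
    (hT : Triangle.mk f g γ ∈ distTriang C) (ha' : P a') (hb : P b) (h : q ⟶ b⟦(1 : ℤ)⟧) :
    h = 0 := by
  have hfh : f ≫ h = 0 := by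
    refine hγ.eq_zero_of_comp_shift_eq_zero hext ha' hb _ ?_
    have hγf : γ ≫ f⟦(1 : ℤ)⟧' = 0 := comp_distTriang_mor_zero₃₁ _ hT
    rw [Functor.map_comp, ← Category.assoc, hγf, zero_comp]
  obtain ⟨v, rfl⟩ := Triangle.yoneda_exact₂ _ hT h hfh
  obtain ⟨w, rfl⟩ := hγ.1.2 _ (shiftClos_shift 1 hb) v
  have hgγ : g ≫ γ = 0 := comp_distTriang_mor_zero₂₃ _ hT
  change g ≫ γ ≫ w = 0
  rw [← Category.assoc, hgγ, zero_comp]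

lemma shift_hom_eq_zero_of_isExactProjective {p b : C} (hp : IsExactProjective P p) (hb : P b)
    (h : p ⟶ b⟦(1 : ℤ)⟧) : h = 0 := by
  obtain ⟨y, i, s, hT⟩ := distinguished_cocone_triangle₂ h
  have hy : P y := hext i s ⟨h, hT⟩ hb hp.1
  obtain ⟨-, -, hsurj⟩ := hp.2 b y p hb hy hp.1 i s ⟨h, hT⟩
  obtain ⟨σ, hσ⟩ := hsurj (𝟙 p)
  have : IsSplitEpi s := ⟨⟨σ, hσ⟩⟩
  exact Triangle.mor₃_eq_zero_of_epi₂ _ hT (inferInstanceAs (Epi s))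

end Wakamatsu

lemma isExactProjective_of_shift_hom_eq_zero {P : C → Prop} {p : C} (hp : P p)
    (hneg : ∀ b : C, P b → ∀ w : p ⟶ b⟦(-1 : ℤ)⟧, w = 0)
    (hpos : ∀ b : C, P b → ∀ h : p ⟶ b⟦(1 : ℤ)⟧, h = 0) : IsExactProjective P p :=
  ⟨hp, fun _ _ _ hx' _ hx'' _ _ hfg =>
    ⟨hfg.comp_left_injective (hneg _ hx''), hfg.exists_comp_eq,
      hfg.comp_right_surjective (hpos _ hx')⟩⟩

end

/-- Let `𝒜 ⊆ C` be an additive subcategory closed under extensions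
with `C(a, Σ⁻¹ b) = 0` for all `a, b ∈ 𝒜`, and assume that every object of `𝒜` has a
`(Σ𝒜)`-envelope.  Then every `a ∈ 𝒜` admits a conflation `a' ⟶ q ⟶ a` in `𝒜` with
`C(q, Σ𝒜) = 0`; that is, the exact structure on `𝒜` given by the short triangles has
enough projective objects, the projectives being exactly the `p ∈ 𝒜` with
`C(p, Σ𝒜) = 0`. -/
theorem statement7 {k : Type} [Field k] [Linear k C]
    [EssentiallySmall.{v} C] [IsIdempotentComplete C]
    [∀ x y : C, FiniteDimensional k (x ⟶ y)]
    (P : C → Prop) (hadd : IsAdditiveSubcat P)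
    (hext : ∀ {a e b : C} (f : a ⟶ e) (g : e ⟶ b), ShortTri f g → P a → P b → P e)
    (hneg : ∀ a b : C, P a → P b → ∀ f : a ⟶ b⟦(-1 : ℤ)⟧, f = 0)
    (henv : ∀ a : C, P a → ∃ (e : C) (γ : a ⟶ e), IsEnvelope (ShiftClos 1 P) γ) :
    (∀ a : C, P a → ∃ (a' q : C) (_ : P a') (_ : P q) (f : a' ⟶ q) (g : q ⟶ a),
      ShortTri f g ∧ ∀ b : C, P b → ∀ h : q ⟶ b⟦(1 : ℤ)⟧, h = 0) ∧
    (∀ p : C, P p →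
      (IsExactProjective P p ↔ ∀ b : C, P b → ∀ h : p ⟶ b⟦(1 : ℤ)⟧, h = 0)) := by
  constructor
  · intro a ha
    obtain ⟨e, γ, hγ⟩ := henv a ha
    obtain ⟨a', ha', ⟨ι⟩⟩ := hγ.1.1
    have hγ' := hγ.comp_iso ι (shiftClos_shift 1 ha')
    obtain ⟨q, f, g, hT⟩ := distinguished_cocone_triangle₂ (γ ≫ ι.hom)
    exact ⟨a', q, ha', hext f g ⟨_, hT⟩ ha' ha, f, g, ⟨_, hT⟩,
      fun b hb h => shift_hom_eq_zero_of_envelope_triangle hext hγ' hT ha' hb h⟩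
  · exact fun p hp => ⟨fun hproj b hb => shift_hom_eq_zero_of_isExactProjective hext hproj hb,
      isExactProjective_of_shift_hom_eq_zero hp (hneg p · hp)⟩
end

section
/- Let S be a 2-orthogonal collection in 𝒞, and let α: a^0 → a^1 be a morphism in the extension closure ⟨S⟩ such that the map 𝒞(s, α): 𝒞(s, a^0) → 𝒞(s, a^1) is injective for each s ∈ S. Then α is a categorical monomorphism in ⟨S⟩, i.e. 𝒞(a, α): 𝒞(a, a^0) → 𝒞(a, a^1) is injective for every a ∈ ⟨S⟩. -/
/-!
Common setup: `k` is a field, `C` an essentially small `k`-linear Hom-finite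
triangulated category with split idempotents; `Σ` (suspension) is the shift by `1`.
-/

open CategoryTheory CategoryTheory.Limits CategoryTheory.Pretriangulated

universe v u

variable {C : Type u} [Category.{v} C] [Preadditive C] [HasZeroObject C]
  [HasShift C ℤ] [∀ n : ℤ, (shiftFunctor C n).Additive] [Pretriangulated C]
  [HasBinaryBiproducts C]

/-!
Since `S` is `2`-orthogonal, `Hom(s⟦1⟧, t) ≅ Hom(s, t⟦-1⟧) = 0` for `s t ∈ S`, and inducting on
both arguments gives `Hom(x⟦1⟧, y) = 0` for all `x y ∈ ⟨S⟩`. Now induct on `a ∈ ⟨S⟩`: for an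
extension `a ⟶ e ⟶ b ⟶ a⟦1⟧` and `u : e ⟶ a⁰` with `u ≫ α = 0`, the induction hypothesis for `a`
makes `u` factor as `e ⟶ b ⟶ a⁰` through some `v`; then `v ≫ α` kills `e ⟶ b`, so it factors
through `b ⟶ a⟦1⟧` and vanishes, and the hypothesis for `b` gives `v = 0`.
-/

omit [HasZeroObject C] [Pretriangulated C] [HasBinaryBiproducts C] in
lemma shift_one_hom_eq_zero_iff {x y : C} :
    (∀ f : x⟦(1 : ℤ)⟧ ⟶ y, f = 0) ↔ ∀ g : x ⟶ y⟦(-1 : ℤ)⟧, g = 0 := by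
  have : (shiftEquiv C (1 : ℤ)).functor.Additive :=
    inferInstanceAs (shiftFunctor C (1 : ℤ)).Additive
  let e : (x⟦(1 : ℤ)⟧ ⟶ y) ≃+ (x ⟶ y⟦(-1 : ℤ)⟧) :=
    (shiftEquiv C (1 : ℤ)).toAdjunction.homAddEquiv x y
  constructor
  · intro h g
    rw [← e.apply_symm_apply g, h (e.symm g), map_zero]
  · intro h f
    rw [← e.symm_apply_apply f, h (e f), map_zero]

namespace ExtClos

variable {S : Set C}

lemma hom_eq_zero_of_forall_mem_target {c : C} (hS : ∀ t ∈ S, ∀ f : c ⟶ t, f = 0)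
    {y : C} (hy : ExtClos S y) (f : c ⟶ y) : f = 0 := by
  induction hy with
  | of ht => exact hS _ ht f
  | zero hz => exact hz.eq_of_tgt f 0
  | sum _ _ ihx ihy =>
    ext
    · simpa using ihx (f ≫ biprod.fst)
    · simpa using ihy (f ≫ biprod.snd)
  | iso e _ ih => simpa using congrArg (· ≫ e.hom) (ih (f ≫ e.inv))
  | @ext a e b i p hT _ _ iha ihb =>
    obtain ⟨h, hT⟩ := hT
    obtain ⟨g, rfl⟩ : ∃ g : c ⟶ a, f = g ≫ i := Triangle.coyoneda_exact₂ _ hT f (ihb _)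
    rw [iha g, zero_comp]

lemma hom_eq_zero_of_forall_mem_source {z : C} (hS : ∀ s ∈ S, ∀ f : s ⟶ z, f = 0)
    {x : C} (hx : ExtClos S x) (f : x ⟶ z) : f = 0 := by
  induction hx with
  | of hs => exact hS _ hs f
  | zero hz => exact hz.eq_of_src f 0
  | sum _ _ ihx ihy =>
    ext
    · simpa using ihx (biprod.inl ≫ f)
    · simpa using ihy (biprod.inr ≫ f)
  | iso e _ ih => simpa using congrArg (e.inv ≫ ·) (ih (e.hom ≫ f))
  | @ext a e b i p hT _ _ iha ihb =>
    obtain ⟨h, hT⟩ := hT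
    obtain ⟨g, rfl⟩ : ∃ g : b ⟶ z, f = p ≫ g := Triangle.yoneda_exact₂ _ hT f (iha _)
    rw [ihb g, comp_zero]

lemma shift_hom_eq_zero (hS : ∀ s ∈ S, ∀ t ∈ S, ∀ f : s ⟶ t⟦(-1 : ℤ)⟧, f = 0)
    {x y : C} (hx : ExtClos S x) (hy : ExtClos S y) (f : x⟦(1 : ℤ)⟧ ⟶ y) : f = 0 := by
  refine shift_one_hom_eq_zero_iff.mpr (fun g => ?_) f
  refine hom_eq_zero_of_forall_mem_source (fun s hs => ?_) hx g
  refine shift_one_hom_eq_zero_iff.mp (fun f => ?_)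
  refine hom_eq_zero_of_forall_mem_target (fun t ht => ?_) hy f
  exact shift_one_hom_eq_zero_iff.mpr (hS s hs t ht)

lemma eq_zero_of_comp_eq_zero (hS : ∀ s ∈ S, ∀ t ∈ S, ∀ f : s ⟶ t⟦(-1 : ℤ)⟧, f = 0)
    {a₀ a₁ : C} (h₁ : ExtClos S a₁) (α : a₀ ⟶ a₁)
    (hα : ∀ s ∈ S, ∀ u : s ⟶ a₀, u ≫ α = 0 → u = 0)
    {a : C} (ha : ExtClos S a) (u : a ⟶ a₀) (hu : u ≫ α = 0) : u = 0 := by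
  induction ha with
  | of hs => exact hα _ hs u hu
  | zero hz => exact hz.eq_of_src u 0
  | sum _ _ ihx ihy =>
    ext
    · simpa using ihx (biprod.inl ≫ u) (by simp [hu])
    · simpa using ihy (biprod.inr ≫ u) (by simp [hu])
  | iso e _ ih => simpa using congrArg (e.inv ≫ ·) (ih (e.hom ≫ u) (by simp [hu]))
  | @ext a e b i p hT ha _ iha ihb =>
    obtain ⟨h, hT⟩ := hT
    obtain ⟨v, rfl⟩ : ∃ v : b ⟶ a₀, u = p ≫ v :=
      Triangle.yoneda_exact₂ _ hT u (iha (i ≫ u) (by rw [Category.assoc, hu, comp_zero]))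
    obtain ⟨w, hw⟩ : ∃ w : a⟦(1 : ℤ)⟧ ⟶ a₁, v ≫ α = h ≫ w :=
      Triangle.yoneda_exact₂ _ (rot_of_distTriang _ hT) (v ≫ α)
        ((Category.assoc _ _ _).symm.trans hu)
    rw [ihb v (by rw [hw, shift_hom_eq_zero hS ha h₁ w, comp_zero]), comp_zero]

end ExtClos

/-- Let `S` be a `2`-orthogonal collection and `α : a⁰ ⟶ a¹` a
morphism in `⟨S⟩` such that `C(s, α)` is injective for each `s ∈ S`.  Then `α` is a
categorical monomorphism in `⟨S⟩`: `C(a, α)` is injective for every `a ∈ ⟨S⟩`. -/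
theorem statement8 {k : Type} [Field k] [Linear k C]
    [EssentiallySmall.{v} C] [IsIdempotentComplete C]
    [∀ x y : C, FiniteDimensional k (x ⟶ y)]
    (S : Set C) (hS : IsOrthogonalCollection 2 S)
    {a0 a1 : C} (h0 : ExtClos S a0) (h1 : ExtClos S a1) (α : a0 ⟶ a1)
    (hinj : ∀ s ∈ S, Function.Injective (fun u : s ⟶ a0 => u ≫ α)) :
    ∀ a : C, ExtClos S a → Function.Injective (fun u : a ⟶ a0 => u ≫ α) := by
  have hS₁ : ∀ s ∈ S, ∀ t ∈ S, ∀ f : s ⟶ t⟦(-1 : ℤ)⟧, f = 0 := fun s hs t ht =>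
    hS.shift_hom_eq_zero s hs t ht (-1) (by norm_num) (by norm_num)
  intro a ha
  refine (injective_iff_map_eq_zero (Preadditive.rightComp a α)).mpr ?_
  exact ExtClos.eq_zero_of_comp_eq_zero hS₁ h1 α
    (fun s hs => (injective_iff_map_eq_zero (Preadditive.rightComp s α)).mp (hinj s hs)) ha
end

section
/- Let S be a 2-orthogonal collection in 𝒞, so that ⟨S⟩ is a proper abelian subcategory of 𝒞. Let i be an integer and 𝒱 ⊆ ⟨S⟩ an additive subcategory which is closed under extensions in the abelian category ⟨S⟩. Then Σ^i 𝒱 is closed under extensions in the triangulated category 𝒞: if v' → e → v'' is a short triangle in 𝒞 with v', v'' ∈ Σ^i 𝒱, then e ∈ Σ^i 𝒱. -/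
/-!
Common setup: `k` is a field, `C` an essentially small `k`-linear Hom-finite
triangulated category with split idempotents; `Σ` (suspension) is the shift by `1`.
-/

open CategoryTheory CategoryTheory.Limits CategoryTheory.Pretriangulated

universe v u

variable {C : Type u} [Category.{v} C] [Preadditive C] [HasZeroObject C]
  [HasShift C ℤ] [∀ n : ℤ, (shiftFunctor C n).Additive] [Pretriangulated C]
  [HasBinaryBiproducts C]

/-! For `a, b ∈ ⟨S⟩` there are no nonzero morphisms `Σ a ⟶ b`: on `S` this is 2-orthogonality,
and it spreads to `⟨S⟩` one variable at a time, since the vanishing of `Hom(-, y)` or `Hom(x, -)`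
is stable under extensions by the long exact Hom sequences. Given this, the Hom sequences of a
distinguished triangle with all three terms in `⟨S⟩` make it a kernel–cokernel pair in `⟨S⟩`.
Applying `Σ^{-i}` to a short triangle with outer terms in `Σ^i 𝒱` gives such a triangle with
outer terms in `𝒱`, so its middle term lies in `𝒱` by extension closure of `𝒱` in `⟨S⟩`. -/

namespace ExtClos

variable {S : Set C}

lemma subsingleton_hom_source {y : C} (hS : ∀ s ∈ S, Subsingleton (s ⟶ y)) {a : C}
    (ha : ExtClos S a) : Subsingleton (a ⟶ y) := by
  induction ha with
  | of hs => exact hS _ hs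
  | zero hz => exact ⟨hz.eq_of_src⟩
  | sum _ _ ihx ihy => exact ⟨fun _ _ => biprod.hom_ext' _ _ (ihx.allEq _ _) (ihy.allEq _ _)⟩
  | iso e _ ih => exact (e.homCongr (Iso.refl y)).subsingleton_congr.mp ih
  | ext f g hT _ _ iha ihb =>
    obtain ⟨h, hT⟩ := hT
    refine subsingleton_of_forall_eq 0 fun φ => ?_
    obtain ⟨χ, rfl⟩ := Triangle.yoneda_exact₂ _ hT φ (iha.allEq _ _)
    rw [ihb.allEq χ 0]; exact comp_zero

lemma subsingleton_hom_target {x : C} (hS : ∀ s ∈ S, Subsingleton (x ⟶ s)) {b : C}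
    (hb : ExtClos S b) : Subsingleton (x ⟶ b) := by
  induction hb with
  | of hs => exact hS _ hs
  | zero hz => exact ⟨hz.eq_of_tgt⟩
  | sum _ _ ihx ihy => exact ⟨fun _ _ => biprod.hom_ext _ _ (ihx.allEq _ _) (ihy.allEq _ _)⟩
  | iso e _ ih => exact ((Iso.refl x).homCongr e).subsingleton_congr.mp ih
  | ext f g hT _ _ iha ihb =>
    obtain ⟨h, hT⟩ := hT
    refine subsingleton_of_forall_eq 0 fun φ => ?_
    obtain ⟨χ, rfl⟩ := Triangle.coyoneda_exact₂ _ hT φ (ihb.allEq _ _)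
    rw [iha.allEq χ 0]; exact zero_comp

end ExtClos

omit [Preadditive C] [HasZeroObject C] [∀ n : ℤ, (shiftFunctor C n).Additive] [Pretriangulated C]
  [HasBinaryBiproducts C] in
lemma subsingleton_shift_one_hom_iff (a b : C) :
    Subsingleton (a⟦(1 : ℤ)⟧ ⟶ b) ↔ Subsingleton (a ⟶ b⟦(-1 : ℤ)⟧) :=
  ((shiftEquiv C (1 : ℤ)).toAdjunction.homEquiv a b).subsingleton_congr

lemma IsOrthogonalCollection.subsingleton_shift_one_hom {w : ℤ} {S : Set C}
    (hS : IsOrthogonalCollection w S) (hw : 2 ≤ w) {a b : C} (ha : ExtClos S a)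
    (hb : ExtClos S b) : Subsingleton (a⟦(1 : ℤ)⟧ ⟶ b) := by
  have hbase : ∀ s ∈ S, ∀ t ∈ S, Subsingleton (s⟦(1 : ℤ)⟧ ⟶ t) := fun s hs t ht =>
    (subsingleton_shift_one_hom_iff s t).mpr <|
      subsingleton_of_forall_eq 0 (hS.shift_hom_eq_zero s hs t ht (-1) (by lia) le_rfl)
  rw [subsingleton_shift_one_hom_iff]
  exact ha.subsingleton_hom_source fun s hs =>
    (subsingleton_shift_one_hom_iff s b).mp (hb.subsingleton_hom_target (hbase s hs))

section TriangleInFullSubcategory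

open ObjectProperty

variable {P : C → Prop} (hP : ∀ ⦃a b : C⦄, P a → P b → Subsingleton (a⟦(1 : ℤ)⟧ ⟶ b))
  {T : Triangle C} (hT : T ∈ distTriang C) (h₁ : P T.obj₁) (h₂ : P T.obj₂) (h₃ : P T.obj₃)

omit [HasBinaryBiproducts C] in
include hP hT h₃ in
lemma mono_homMk_mor₁ :
    Mono (homMk T.mor₁ : (⟨_, h₁⟩ : FullSubcategory P) ⟶ ⟨_, h₂⟩) := by
  rw [Preadditive.mono_iff_cancel_zero]
  intro x φ hφ
  apply hom_ext
  show φ.hom = 0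
  have hφ' : φ.hom ≫ T.mor₁ = 0 := congrArg (·.hom) hφ
  obtain ⟨χ, hχ⟩ := Triangle.coyoneda_exact₁ _ hT (φ.hom⟦(1 : ℤ)⟧')
    (by rw [← Functor.map_comp, hφ', Functor.map_zero])
  apply (shiftFunctor C (1 : ℤ)).map_injective
  rw [hχ, (hP x.property h₃).allEq χ 0, zero_comp, Functor.map_zero]

omit [HasBinaryBiproducts C] in
include hP hT h₁ in
lemma epi_homMk_mor₂ :
    Epi (homMk T.mor₂ : (⟨_, h₂⟩ : FullSubcategory P) ⟶ ⟨_, h₃⟩) := by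
  rw [Preadditive.epi_iff_cancel_zero]
  intro x φ hφ
  apply hom_ext
  show φ.hom = 0
  obtain ⟨χ, hχ⟩ := Triangle.yoneda_exact₃ _ hT φ.hom (congrArg (·.hom) hφ)
  rw [hχ, (hP h₁ x.property).allEq χ 0, comp_zero]

omit [HasBinaryBiproducts C] in
include hP hT in
lemma isKernelCokernelPair_homMk :
    IsKernelCokernelPair (homMk T.mor₁ : (⟨_, h₁⟩ : FullSubcategory P) ⟶ ⟨_, h₂⟩)
      (homMk T.mor₂ : (⟨_, h₂⟩ : FullSubcategory P) ⟶ ⟨_, h₃⟩) := by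
  have w : (homMk T.mor₁ : (⟨_, h₁⟩ : FullSubcategory P) ⟶ ⟨_, h₂⟩) ≫
      (homMk T.mor₂ : (⟨_, h₂⟩ : FullSubcategory P) ⟶ ⟨_, h₃⟩) = 0 :=
    hom_ext _ (comp_distTriang_mor_zero₁₂ T hT)
  have := mono_homMk_mor₁ hP hT h₁ h₂ h₃
  have := epi_homMk_mor₂ hP hT h₁ h₂ h₃
  refine ⟨w, ⟨KernelFork.IsLimit.ofι' _ w fun k hk => ?_⟩,
    ⟨CokernelCofork.IsColimit.ofπ' _ w fun k hk => ?_⟩⟩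
  · have hlift := Triangle.coyoneda_exact₂ T hT k.hom (congrArg (·.hom) hk)
    exact ⟨homMk hlift.choose, hom_ext _ hlift.choose_spec.symm⟩
  · have hdesc := Triangle.yoneda_exact₂ T hT k.hom (congrArg (·.hom) hk)
    exact ⟨homMk hdesc.choose, hom_ext _ hdesc.choose_spec.symm⟩

end TriangleInFullSubcategory

omit [Preadditive C] [HasZeroObject C] [∀ n : ℤ, (shiftFunctor C n).Additive] [Pretriangulated C]
  [HasBinaryBiproducts C] in
lemma shiftClos_iff {n : ℤ} {P : C → Prop} (hP : ∀ {x y : C}, (x ≅ y) → P x → P y) {y : C} :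
    ShiftClos n P y ↔ P (y⟦-n⟧) :=
  ⟨fun ⟨x, hx, ⟨e⟩⟩ => hP ((shiftFunctor C (-n)).mapIso e ≪≫ shiftShiftNeg x n).symm hx,
    fun hy => ⟨_, hy, ⟨(shiftNegShift y n).symm⟩⟩⟩

/-- Let `S` be a `2`-orthogonal collection, `i` an integer, and
`𝒱 ⊆ ⟨S⟩` an additive subcategory closed under extensions in the abelian category
`⟨S⟩`.  Then `Σ^i 𝒱` is closed under extensions in the triangulated category `C`. -/
theorem statement11 {k : Type} [Field k] [Linear k C]
    [EssentiallySmall.{v} C] [IsIdempotentComplete C]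
    [∀ x y : C, FiniteDimensional k (x ⟶ y)]
    (S : Set C) (hS : IsOrthogonalCollection 2 S) (i : ℤ)
    (V : C → Prop) (hVsub : ∀ x : C, V x → ExtClos S x) (hVadd : IsAdditiveSubcat V)
    (hVext : ∀ (x y z : ObjectProperty.FullSubcategory (ExtClos S)) (f : x ⟶ y) (g : y ⟶ z),
      IsKernelCokernelPair f g → V x.obj → V z.obj → V y.obj)
    {v' e v'' : C} (f : v' ⟶ e) (g : e ⟶ v'') (hT : ShortTri f g)
    (h' : ShiftClos i V v') (h'' : ShiftClos i V v'') :
    ShiftClos i V e := by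
  obtain ⟨h, hT⟩ := hT
  rw [shiftClos_iff hVadd.iso_closed] at h' h'' ⊢
  let T := (Triangle.shiftFunctor C (-i)).obj (Triangle.mk f g h)
  have hT' : T ∈ distTriang C := Triangle.shift_distinguished _ hT (-i)
  have hS' : ∀ ⦃a b : C⦄, ExtClos S a → ExtClos S b → Subsingleton (a⟦(1 : ℤ)⟧ ⟶ b) :=
    fun _ _ => hS.subsingleton_shift_one_hom le_rfl
  have he : ExtClos S T.obj₂ := .ext T.mor₁ T.mor₂ ⟨T.mor₃, hT'⟩ (hVsub _ h') (hVsub _ h'')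
  exact hVext _ _ _ _ _ (isKernelCokernelPair_homMk hS' hT' (hVsub _ h') he (hVsub _ h'')) h' h''
end

section
/- Let S be a 2-orthogonal collection in 𝒞 and let (𝒯, ℱ) be a torsion pair in the abelian category ⟨S⟩ such that 𝒯 is closed under subobjects in ⟨S⟩. Assume f ∈ ℱ is a simple object of ⟨S⟩ and that there is a distinguished triangle Σ^{-1}t →^{τ} f →^{φ} g → t in which τ is a (Σ^{-1}𝒯)-cover. Then g ∈ ℱ. -/
/-!
Common setup: `k` is a field, `C` an essentially small `k`-linear Hom-finite
triangulated category with split idempotents; `Σ` (suspension) is the shift by `1`.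
-/

open CategoryTheory CategoryTheory.Limits CategoryTheory.Pretriangulated

universe v u

variable {C : Type u} [Category.{v} C] [Preadditive C] [HasZeroObject C]
  [HasShift C ℤ] [∀ n : ℤ, (shiftFunctor C n).Additive] [Pretriangulated C]
  [HasBinaryBiproducts C]

/-!
Let `t' → g → f'` be the torsion sequence of `g`; it suffices to show `t' = 0`. Since
`Hom(⟨S⟩, Σ⁻¹⟨S⟩) = 0`, the triangle `f → g → Σu` with `Σu ≅ t` behaves like a short exact
sequence of `⟨S⟩`. If `t' ≠ 0`, some `s ∈ S` embeds into `t'`. As `f` is simple, torsion-free and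
`T` is closed under subobjects, `f` does not embed into `t'`, so `f → g → f'` is a monomorphism,
and then so is `σ : s → t' → g → Σu`. Its cokernel `c` is a torsion quotient of `Σu` through which
`Στ` factors, so `τ` factors through `Σ⁻¹c ∈ Σ⁻¹T`, and right minimality of the cover forces
`Σu → c` to be a split monomorphism killing `σ ≠ 0`.

A monomorphism here is a map left cancellable against `⟨S⟩` (`IsMonoAgainst`), and its cokernel
is its cone. That the cone of a monomorphism out of an object of `S` stays in `⟨S⟩` is proved by
induction on the extension closure.
-/

section Preadditive

omit [HasZeroObject C] [HasShift C ℤ] [∀ n : ℤ, (shiftFunctor C n).Additive]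
  [Pretriangulated C] [HasBinaryBiproducts C]

def IsMonoAgainst (P : C → Prop) {A B : C} (w : A ⟶ B) : Prop :=
  ∀ ⦃W : C⦄, P W → ∀ ξ : W ⟶ A, ξ ≫ w = 0 → ξ = 0

variable {P : C → Prop}

theorem isMonoAgainst_of_mono {A B : C} (w : A ⟶ B) [Mono w] : IsMonoAgainst P w :=
  fun _ _ _ hξ => zero_of_comp_mono w hξ

theorem IsMonoAgainst.comp {A B D : C} {v : A ⟶ B} {w : B ⟶ D} (hv : IsMonoAgainst P v)
    (hw : IsMonoAgainst P w) : IsMonoAgainst P (v ≫ w) :=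
  fun _ hW ξ hξ => hv hW ξ (hw hW _ (by rwa [Category.assoc]))

theorem IsMonoAgainst.of_comp {A B D : C} {v : A ⟶ B} {w : B ⟶ D}
    (h : IsMonoAgainst P (v ≫ w)) : IsMonoAgainst P v :=
  fun _ hW ξ hξ => h hW ξ (by rw [← Category.assoc, hξ, zero_comp])

theorem IsMonoAgainst.ne_zero {A B : C} {w : A ⟶ B} (hw : IsMonoAgainst P w) (hA : P A)
    (hA0 : 𝟙 A ≠ 0) : w ≠ 0 :=
  fun h0 => hA0 (hw hA _ (by rw [Category.id_comp, h0]))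

theorem mono_of_isMonoAgainst {x y : ObjectProperty.FullSubcategory P} (ψ : x ⟶ y)
    (hψ : IsMonoAgainst P ψ.hom) : Mono ψ :=
  Preadditive.mono_of_cancel_zero ψ fun g hg =>
    ObjectProperty.hom_ext _ (hψ (ObjectProperty.FullSubcategory.property _) g.hom
      (by simpa using congrArg (·.hom) hg))

end Preadditive

section Shift

omit [HasZeroObject C] [∀ n : ℤ, (shiftFunctor C n).Additive] [Pretriangulated C]
  [HasBinaryBiproducts C]

theorem forall_shift_hom_eq_zero_iff {x y : C} :
    (∀ h : x⟦(1 : ℤ)⟧ ⟶ y, h = 0) ↔ ∀ h : x ⟶ y⟦(-1 : ℤ)⟧, h = 0 := by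
  let e := (shiftEquiv C (1 : ℤ)).toAdjunction.homEquiv x y
  exact ⟨fun H h => e.symm.injective ((H _).trans (H _).symm),
    fun H h => e.injective ((H _).trans (H _).symm)⟩

omit [Preadditive C] in
theorem isSplitMono_of_isCover {T : C → Prop} {u v c : C} {τ : u ⟶ v}
    (hτ : IsCover (ShiftClos (-1) T) τ) (hc : T c) (q : u⟦(1 : ℤ)⟧ ⟶ c) (ε : c ⟶ v⟦(1 : ℤ)⟧)
    (hqε : q ≫ ε = τ⟦(1 : ℤ)⟧') : IsSplitMono q := by
  let e : c ≅ c⟦(-1 : ℤ)⟧⟦(1 : ℤ)⟧ := ((shiftFunctorCompIsoId C (-1 : ℤ) 1 (by omega)).app c).symm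
  obtain ⟨q', hq'⟩ := (shiftFunctor C (1 : ℤ)).map_surjective (q ≫ e.hom)
  obtain ⟨ε', hε'⟩ := (shiftFunctor C (1 : ℤ)).map_surjective (e.inv ≫ ε)
  have hτ' : q' ≫ ε' = τ := (shiftFunctor C (1 : ℤ)).map_injective (by simp [hq', hε', hqε])
  obtain ⟨θ, hθ⟩ := hτ.1.2 _ ⟨c, hc, ⟨Iso.refl _⟩⟩ ε'
  have : IsIso (q' ≫ θ) := hτ.2 _ (by rw [Category.assoc, hθ, hτ'])
  exact .mk' ⟨e.hom ≫ θ⟦(1 : ℤ)⟧' ≫ inv ((q' ≫ θ)⟦(1 : ℤ)⟧'), by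
    rw [← Category.assoc, ← hq', ← Category.assoc, ← Functor.map_comp, IsIso.hom_inv_id]⟩

end Shift

section Pretriangulated

omit [HasBinaryBiproducts C]

variable {P : C → Prop} {X Y Z : C} {f : X ⟶ Y} {g : Y ⟶ Z} {h : Z ⟶ X⟦(1 : ℤ)⟧}

theorem coyoneda_exact₂_mk (hT : Triangle.mk f g h ∈ distTriang C) {W : C} (φ : W ⟶ Y)
    (hφ : φ ≫ g = 0) : ∃ ψ : W ⟶ X, φ = ψ ≫ f :=
  Triangle.coyoneda_exact₂ _ hT φ hφ

theorem coyoneda_exact₃_mk (hT : Triangle.mk f g h ∈ distTriang C) {W : C} (φ : W ⟶ Z)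
    (hφ : φ ≫ h = 0) : ∃ ψ : W ⟶ Y, φ = ψ ≫ g :=
  Triangle.coyoneda_exact₃ _ hT φ hφ

theorem yoneda_exact₂_mk (hT : Triangle.mk f g h ∈ distTriang C) {W : C} (φ : Y ⟶ W)
    (hφ : f ≫ φ = 0) : ∃ ψ : Z ⟶ W, φ = g ≫ ψ :=
  Triangle.yoneda_exact₂ _ hT φ hφ

theorem yoneda_exact₃_mk (hT : Triangle.mk f g h ∈ distTriang C) {W : C} (φ : Z ⟶ W)
    (hφ : g ≫ φ = 0) : ∃ ψ : X⟦(1 : ℤ)⟧ ⟶ W, φ = h ≫ ψ :=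
  Triangle.yoneda_exact₃ _ hT φ hφ

theorem comp_distTriang_mk_zero₁₂ (hT : Triangle.mk f g h ∈ distTriang C) : f ≫ g = 0 :=
  comp_distTriang_mor_zero₁₂ _ hT

theorem comp_distTriang_mk_zero₃₁ (hT : Triangle.mk f g h ∈ distTriang C) :
    h ≫ f⟦(1 : ℤ)⟧' = 0 :=
  comp_distTriang_mor_zero₃₁ _ hT

theorem isMonoAgainst_mor₁ (hT : Triangle.mk f g h ∈ distTriang C)
    (hZ : ∀ W, P W → ∀ ψ : W ⟶ Z⟦(-1 : ℤ)⟧, ψ = 0) : IsMonoAgainst P f := by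
  intro W hW ξ hξ
  obtain ⟨ψ, rfl⟩ := Triangle.coyoneda_exact₂ _ (inv_rot_of_distTriang _ hT) ξ hξ
  rw [hZ W hW ψ]
  exact zero_comp

theorem IsMonoAgainst.comp_mor₂ (hT : Triangle.mk f g h ∈ distTriang C) {W V : C} {j : W ⟶ Y}
    {p : Y ⟶ V} (hj : IsMonoAgainst P j) (hfp : IsMonoAgainst P (f ≫ p)) (hjp : j ≫ p = 0) :
    IsMonoAgainst P (j ≫ g) := by
  intro U hU ξ hξ
  obtain ⟨ψ, hψ : ξ ≫ j = ψ ≫ f⟩ :=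
    coyoneda_exact₂_mk hT (ξ ≫ j) (by rwa [Category.assoc])
  have hψ0 : ψ = 0 := hfp hU ψ (by rw [← Category.assoc, ← hψ, Category.assoc, hjp, comp_zero])
  exact hj hU ξ (by rw [hψ, hψ0, zero_comp])

theorem eq_of_mor₂_comp_eq (hT : Triangle.mk f g h ∈ distTriang C) {W : C}
    (hW : ∀ ζ : X⟦(1 : ℤ)⟧ ⟶ W, ζ = 0) {D₁ D₂ : Z ⟶ W} (hD : g ≫ D₁ = g ≫ D₂) : D₁ = D₂ := by
  obtain ⟨ζ, hζ⟩ := yoneda_exact₃_mk hT (D₁ - D₂)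
    (show g ≫ (D₁ - D₂) = 0 by rw [Preadditive.comp_sub, hD, sub_self])
  rw [← sub_eq_zero, hζ, hW ζ, comp_zero]

theorem comp_mor₃_eq_zero_of_isMonoAgainst (hT : Triangle.mk f g h ∈ distTriang C)
    (hf : IsMonoAgainst P f) {W : C} (hW : P W) (ρ : W⟦(1 : ℤ)⟧ ⟶ Z) : ρ ≫ h = 0 := by
  obtain ⟨ω, hω⟩ := (shiftFunctor C (1 : ℤ)).map_surjective (ρ ≫ h)
  have hωf : ω ≫ f = 0 := (shiftFunctor C (1 : ℤ)).map_injective (by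
    rw [Functor.map_comp, hω, Category.assoc, comp_distTriang_mk_zero₃₁ hT, comp_zero,
      Functor.map_zero])
  rw [← hω, hf hW ω hωf, Functor.map_zero]

theorem shift_hom_obj₃_eq_zero (hT : Triangle.mk f g h ∈ distTriang C)
    (hf : IsMonoAgainst P f) {W : C} (hW : P W) (hY : ∀ β : W⟦(1 : ℤ)⟧ ⟶ Y, β = 0)
    (ρ : W⟦(1 : ℤ)⟧ ⟶ Z) : ρ = 0 := by
  obtain ⟨β, rfl⟩ :=
    coyoneda_exact₃_mk hT ρ (comp_mor₃_eq_zero_of_isMonoAgainst hT hf hW ρ)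
  rw [hY β, zero_comp]

/-- The defect `𝟙 - η ≫ η'` factors through `h`, and composing with `h` kills every map out of
`X⟦1⟧` because `f` is a monomorphism against `X`. -/
theorem isIso_of_comp_eq_id (hT : Triangle.mk f g h ∈ distTriang C) (hf : IsMonoAgainst P f)
    (hX : P X) {V : C} (hV : ∀ β : X⟦(1 : ℤ)⟧ ⟶ V, β = 0) (η : Z ⟶ V) (η' : V ⟶ Z)
    (hη'η : η' ≫ η = 𝟙 V) (hgη : g ≫ η ≫ η' = g) : IsIso η := by
  obtain ⟨ϑ, hϑ⟩ := yoneda_exact₃_mk hT (𝟙 Z - η ≫ η')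
    (show g ≫ (𝟙 Z - η ≫ η') = 0 by rw [Preadditive.comp_sub, hgη, Category.comp_id, sub_self])
  have hϑ0 : ϑ = 0 := calc
    ϑ = ϑ ≫ (𝟙 Z - η ≫ η') := by
      rw [Preadditive.comp_sub, ← Category.assoc, hV (ϑ ≫ η), zero_comp, Category.comp_id,
        sub_zero]
    _ = 0 := by rw [hϑ, ← Category.assoc, comp_mor₃_eq_zero_of_isMonoAgainst hT hf hX, zero_comp]
  rw [hϑ0, comp_zero, sub_eq_zero] at hϑ
  exact ⟨η', hϑ.symm, hη'η⟩

theorem isMonoAgainst_of_triangle_hom (hT : Triangle.mk f g h ∈ distTriang C) {Y' Z' : C}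
    {f' : X ⟶ Y'} {g' : Y' ⟶ Z'} {h' : Z' ⟶ X⟦(1 : ℤ)⟧} (hT' : Triangle.mk f' g' h' ∈ distTriang C)
    {a : Y ⟶ Y'} {c : Z ⟶ Z'} (ha : IsMonoAgainst P a) (hfa : f ≫ a = f') (hgc : g ≫ c = a ≫ g')
    (hch : c ≫ h' = h) : IsMonoAgainst P c := by
  intro W hW ξ hξ
  obtain ⟨χ, rfl⟩ := coyoneda_exact₃_mk hT ξ (by rw [← hch, ← Category.assoc, hξ, zero_comp])
  obtain ⟨ς, hς : χ ≫ a = ς ≫ f'⟩ := coyoneda_exact₂_mk hT' (χ ≫ a)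
    (by rw [Category.assoc, ← hgc, ← Category.assoc]; exact hξ)
  have hχ : χ = ς ≫ f := sub_eq_zero.1 (ha hW _ (by
    rw [Preadditive.sub_comp, hς, Category.assoc, hfa, sub_self]))
  rw [hχ, Category.assoc]
  exact (congrArg (ς ≫ ·) (comp_distTriang_mk_zero₁₂ hT)).trans comp_zero

end Pretriangulated

section OrthogonalCollection

variable {S : Set C}

theorem ExtClos.hom_eq_zero_of_source {x Y : C} (hY : ∀ s ∈ S, ∀ h : s ⟶ Y, h = 0)
    (hx : ExtClos S x) (h : x ⟶ Y) : h = 0 := by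
  induction hx with
  | of hs => exact hY _ hs h
  | zero hz => exact hz.eq_of_src _ _
  | sum _ _ ihx ihy =>
    exact biprod.hom_ext' _ _ (by rw [ihx (biprod.inl ≫ h), comp_zero])
      (by rw [ihy (biprod.inr ≫ h), comp_zero])
  | iso e _ ih => simpa using congrArg (e.inv ≫ ·) (ih (e.hom ≫ h))
  | ext f g hT _ _ iha ihb =>
    obtain ⟨_, hT⟩ := hT
    obtain ⟨h', rfl⟩ := yoneda_exact₂_mk hT h (iha _)
    rw [ihb h', comp_zero]

theorem ExtClos.hom_eq_zero_of_target {X y : C} (hX : ∀ s ∈ S, ∀ h : X ⟶ s, h = 0)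
    (hy : ExtClos S y) (h : X ⟶ y) : h = 0 := by
  induction hy with
  | of hs => exact hX _ hs h
  | zero hz => exact hz.eq_of_tgt _ _
  | sum _ _ ihx ihy =>
    exact biprod.hom_ext _ _ (by rw [ihx (h ≫ biprod.fst), zero_comp])
      (by rw [ihy (h ≫ biprod.snd), zero_comp])
  | iso e _ ih => simpa using congrArg (· ≫ e.hom) (ih (h ≫ e.inv))
  | ext f g hT _ _ iha ihb =>
    obtain ⟨_, hT⟩ := hT
    obtain ⟨h', rfl⟩ := coyoneda_exact₂_mk hT h (ihb _)
    rw [iha h', zero_comp]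

namespace IsOrthogonalCollection

variable (hS : IsOrthogonalCollection 2 S)
include hS

theorem shift_one_hom_eq_zero_of_mem {s y : C} (hs : s ∈ S) (hy : ExtClos S y)
    (h : s⟦(1 : ℤ)⟧ ⟶ y) : h = 0 :=
  hy.hom_eq_zero_of_target (fun t ht => forall_shift_hom_eq_zero_iff.2
    (hS.shift_hom_eq_zero s hs t ht (-1) (by omega) le_rfl)) h

theorem hom_shift_neg_one_eq_zero {x y : C} (hx : ExtClos S x) (hy : ExtClos S y)
    (h : x ⟶ y⟦(-1 : ℤ)⟧) : h = 0 :=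
  hx.hom_eq_zero_of_source (fun _ hs => forall_shift_hom_eq_zero_iff.1
    (hS.shift_one_hom_eq_zero_of_mem hs hy)) h

theorem shift_one_hom_eq_zero {x y : C} (hx : ExtClos S x) (hy : ExtClos S y)
    (h : x⟦(1 : ℤ)⟧ ⟶ y) : h = 0 :=
  forall_shift_hom_eq_zero_iff.2 (hS.hom_shift_neg_one_eq_zero hx hy) h

theorem isMonoAgainst_mor₁ {a y b : C} {f : a ⟶ y} {g : y ⟶ b} {h : b ⟶ a⟦(1 : ℤ)⟧}
    (hT : Triangle.mk f g h ∈ distTriang C) (hb : ExtClos S b) :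
    IsMonoAgainst (ExtClos S) f :=
  _root_.isMonoAgainst_mor₁ hT fun _ hW => hS.hom_shift_neg_one_eq_zero hW hb

theorem isMonoAgainst_of_ne_zero {s y : C} (hs : s ∈ S) (hy : ExtClos S y) (σ : s ⟶ y)
    (hσ : σ ≠ 0) : IsMonoAgainst (ExtClos S) σ := by
  induction hy with
  | @of t ht =>
    obtain rfl : s = t := by
      by_contra hne
      exact hσ (hS.hom_eq_zero s hs t ht hne σ)
    have := hS.isIso_of_ne_zero s hs σ hσ
    exact isMonoAgainst_of_mono σ
  | zero hz => exact absurd (hz.eq_of_tgt σ 0) hσ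
  | sum _ _ ihx ihy =>
    by_cases h₁ : σ ≫ biprod.fst = 0
    · refine (ihy (σ ≫ biprod.snd) fun h₂ => hσ ?_).of_comp
      exact biprod.hom_ext _ _ (by rw [h₁, zero_comp]) (by rw [h₂, zero_comp])
    · exact (ihx _ h₁).of_comp
  | iso e _ ih =>
    exact (ih (σ ≫ e.inv) fun h => hσ (by simpa using congrArg (· ≫ e.hom) h)).of_comp
  | ext f g hT _ hb iha ihb =>
    obtain ⟨_, hT⟩ := hT
    by_cases hσg : σ ≫ g = 0
    · obtain ⟨σ', rfl⟩ := coyoneda_exact₂_mk hT σ hσg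
      exact (iha σ' fun h => hσ (by rw [h, zero_comp])).comp (hS.isMonoAgainst_mor₁ hT hb)
    · exact (ihb _ hσg).of_comp

theorem exists_isMonoAgainst {x : C} (hx : ExtClos S x) (hx0 : ¬IsZero x) :
    ∃ s ∈ S, ∃ μ : s ⟶ x, IsMonoAgainst (ExtClos S) μ := by
  induction hx with
  | @of s hs => exact ⟨s, hs, 𝟙 s, isMonoAgainst_of_mono _⟩
  | zero hz => exact absurd hz hx0
  | @sum x y _ _ ihx ihy =>
    by_cases hx : IsZero x
    · obtain ⟨s, hs, μ, hμ⟩ := ihy fun hy => hx0 ((biprod_isZero_iff x y).2 ⟨hx, hy⟩)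
      exact ⟨s, hs, μ ≫ biprod.inr, hμ.comp (isMonoAgainst_of_mono _)⟩
    · obtain ⟨s, hs, μ, hμ⟩ := ihx hx
      exact ⟨s, hs, μ ≫ biprod.inl, hμ.comp (isMonoAgainst_of_mono _)⟩
  | iso e _ ih =>
    obtain ⟨s, hs, μ, hμ⟩ := ih fun hx => hx0 (hx.of_iso e.symm)
    exact ⟨s, hs, μ ≫ e.hom, hμ.comp (isMonoAgainst_of_mono _)⟩
  | @ext a y b f g hT _ hb iha ihb =>
    obtain ⟨h, hT⟩ := hT
    by_cases ha : IsZero a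
    · obtain ⟨s, hs, μ, hμ⟩ :=
        ihb fun hb0 => hx0 (Triangle.isZero₂_of_isZero₁₃ _ hT ha hb0)
      obtain ⟨μ', rfl⟩ :=
        coyoneda_exact₃_mk hT μ (((shiftFunctor C (1 : ℤ)).map_isZero ha).eq_of_tgt _ _)
      exact ⟨s, hs, μ', hμ.of_comp⟩
    · obtain ⟨s, hs, μ, hμ⟩ := iha ha
      exact ⟨s, hs, μ ≫ f, hμ.comp (hS.isMonoAgainst_mor₁ hT hb)⟩

theorem exists_iso_of_simple {f : C} (hf : ExtClos S f)
    [Simple (⟨f, hf⟩ : ObjectProperty.FullSubcategory (ExtClos S))] :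
    ∃ s ∈ S, Nonempty (s ≅ f) := by
  have hf0 : ¬IsZero f := fun h0 => id_nonzero (⟨f, hf⟩ : ObjectProperty.FullSubcategory _)
    (ObjectProperty.hom_ext _ (h0.eq_of_src _ _))
  obtain ⟨s, hs, μ, hμ⟩ := hS.exists_isMonoAgainst hf hf0
  let μ' : (⟨s, .of hs⟩ : ObjectProperty.FullSubcategory (ExtClos S)) ⟶ ⟨f, hf⟩ :=
    ObjectProperty.homMk μ
  have : Mono μ' := mono_of_isMonoAgainst μ' hμ
  have : IsIso μ' := isIso_of_mono_of_nonzero fun h0 =>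
    hμ.ne_zero (.of hs) (hS.id_ne_zero s hs) (congrArg (·.hom) h0)
  exact ⟨s, hs, ⟨(ObjectProperty.ι _).mapIso (asIso μ')⟩⟩

end IsOrthogonalCollection

/-- Every quotient of `y` by a simple subobject, computed as a cone, lies in `⟨S⟩`. -/
def HasConesFromS (S : Set C) (y : C) : Prop :=
  ∀ ⦃s c : C⦄, s ∈ S → ∀ (σ : s ⟶ y) (q : y ⟶ c) (r : c ⟶ s⟦(1 : ℤ)⟧),
    IsMonoAgainst (ExtClos S) σ → Triangle.mk σ q r ∈ distTriang C → ExtClos S c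

theorem HasConesFromS.of_iso {x y : C} (e : x ≅ y) (hx : HasConesFromS S x) :
    HasConesFromS S y := by
  intro s c hs σ q r hσ hT
  refine hx hs (σ ≫ e.inv) (e.hom ≫ q) r (hσ.comp (isMonoAgainst_of_mono _))
    (isomorphic_distinguished _ hT _ ?_)
  exact Triangle.isoMk _ _ (Iso.refl s) e (Iso.refl c)
    (by simp : (σ ≫ e.inv) ≫ e.hom = 𝟙 s ≫ σ) (by simp : (e.hom ≫ q) ≫ 𝟙 c = e.hom ≫ q)
    (by simp : r ≫ (𝟙 s)⟦(1 : ℤ)⟧' = 𝟙 c ≫ r)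

namespace IsOrthogonalCollection

variable (hS : IsOrthogonalCollection 2 S)
include hS

variable {s a y b c : C} {f : a ⟶ y} {g : y ⟶ b} {h : b ⟶ a⟦(1 : ℤ)⟧} {σ : s ⟶ y} {q : y ⟶ c}
  {r : c ⟶ s⟦(1 : ℤ)⟧}

/- The next two lemmas are the octahedra for `s → a → y` (the cone `c` of `σ` is an extension of
`b` by the cone of `s → a`) and for `s → y → b` (`c` is an extension of the cone of `s → b` by
`a`). As `C` is only pretriangulated, the comparison of cones is built by hand from the vanishing
of `Hom(⟨S⟩⟦1⟧, ⟨S⟩)`. -/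
theorem extClos_cone_of_comp_eq_zero (hs : s ∈ S) (ha : ExtClos S a) (hb : ExtClos S b)
    (hD : Triangle.mk f g h ∈ distTriang C) (hA : HasConesFromS S a)
    (hσ : IsMonoAgainst (ExtClos S) σ) (hT : Triangle.mk σ q r ∈ distTriang C)
    (hσg : σ ≫ g = 0) : ExtClos S c := by
  have hsE : ExtClos S s := .of hs
  obtain ⟨σa, rfl⟩ := coyoneda_exact₂_mk hD σ hσg
  obtain ⟨ca, ua, va, hDa⟩ := distinguished_cocone_triangle σa
  have hca : ExtClos S ca := hA hs σa ua va hσ.of_comp hDa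
  obtain ⟨w, hw₁, hw₂⟩ : ∃ w : ca ⟶ c, ua ≫ w = f ≫ q ∧ va ≫ (𝟙 s)⟦(1 : ℤ)⟧' = w ≫ r :=
    complete_distinguished_triangle_morphism _ _ hDa hT (𝟙 s) f (Category.id_comp _).symm
  rw [CategoryTheory.Functor.map_id, Category.comp_id] at hw₂
  have hw : IsMonoAgainst (ExtClos S) w :=
    isMonoAgainst_of_triangle_hom hDa hT (hS.isMonoAgainst_mor₁ hD hb) rfl hw₁ hw₂.symm
  obtain ⟨eb, heb⟩ := yoneda_exact₂_mk hT g hσg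
  have hweb : w ≫ eb = 0 := eq_of_mor₂_comp_eq hDa (hS.shift_one_hom_eq_zero_of_mem hs hb) (by
    rw [← Category.assoc, hw₁, Category.assoc, ← heb, comp_distTriang_mk_zero₁₂ hD, comp_zero])
  obtain ⟨z, qz, rz, hK⟩ := distinguished_cocone_triangle w
  obtain ⟨η, hη⟩ := yoneda_exact₂_mk hK eb hweb
  obtain ⟨η', hη'⟩ := yoneda_exact₂_mk hD (q ≫ qz) (by
    rw [← Category.assoc, ← hw₁, Category.assoc, comp_distTriang_mk_zero₁₂ hK, comp_zero])
  have hη'η : η' ≫ η = 𝟙 b := eq_of_mor₂_comp_eq hD (hS.shift_one_hom_eq_zero ha hb) (by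
    rw [← Category.assoc, ← hη', Category.assoc, ← hη, ← heb, Category.comp_id])
  have hsz := shift_hom_obj₃_eq_zero hK hw hsE (shift_hom_obj₃_eq_zero hT hσ hsE
    (hS.shift_one_hom_eq_zero_of_mem hs (.ext f g ⟨h, hD⟩ ha hb)))
  have hqz : qz ≫ η ≫ η' = qz := by
    rw [← Category.assoc, ← hη]
    exact eq_of_mor₂_comp_eq hT hsz (by rw [← Category.assoc, ← heb, hη'])
  have := isIso_of_comp_eq_id hK hw hca (hS.shift_one_hom_eq_zero hca hb) η η' hη'η hqz
  exact .ext w qz ⟨rz, hK⟩ hca (.iso (asIso η).symm hb)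

theorem extClos_cone_of_comp_ne_zero (hs : s ∈ S) (ha : ExtClos S a) (hb : ExtClos S b)
    (hD : Triangle.mk f g h ∈ distTriang C) (hB : HasConesFromS S b)
    (hσ : IsMonoAgainst (ExtClos S) σ) (hT : Triangle.mk σ q r ∈ distTriang C)
    (hσg : σ ≫ g ≠ 0) : ExtClos S c := by
  have hsE : ExtClos S s := .of hs
  have hσg' := hS.isMonoAgainst_of_ne_zero hs hb (σ ≫ g) hσg
  obtain ⟨cb, ub, vb, hDb⟩ := distinguished_cocone_triangle (σ ≫ g)
  have hcb : ExtClos S cb := hB hs _ ub vb hσg' hDb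
  obtain ⟨ch, hch, -⟩ : ∃ ch : c ⟶ cb, q ≫ ch = g ≫ ub ∧ _ :=
    complete_distinguished_triangle_morphism _ _ hT hDb (𝟙 s) g (Category.id_comp _).symm
  have hfq : IsMonoAgainst (ExtClos S) (f ≫ q) :=
    (hS.isMonoAgainst_mor₁ hD hb).comp_mor₂ hT hσg' (comp_distTriang_mk_zero₁₂ hD)
  obtain ⟨z, qz, rz, hK⟩ := distinguished_cocone_triangle (f ≫ q)
  obtain ⟨η, hη⟩ := yoneda_exact₂_mk hK ch (by
    rw [Category.assoc, hch, ← Category.assoc, comp_distTriang_mk_zero₁₂ hD, zero_comp])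
  obtain ⟨ζ, hζ⟩ := yoneda_exact₂_mk hD (q ≫ qz) (by
    rw [← Category.assoc]; exact comp_distTriang_mk_zero₁₂ hK)
  obtain ⟨η', hη'⟩ := yoneda_exact₂_mk hDb ζ (by
    rw [Category.assoc, ← hζ, ← Category.assoc, comp_distTriang_mk_zero₁₂ hT, zero_comp])
  have hζη : ζ ≫ η = ub := eq_of_mor₂_comp_eq hD (hS.shift_one_hom_eq_zero ha hcb) (by
    rw [← Category.assoc, ← hζ, Category.assoc, ← hη, hch])
  have hη'η : η' ≫ η = 𝟙 cb := eq_of_mor₂_comp_eq hDb (hS.shift_one_hom_eq_zero_of_mem hs hcb) (by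
    rw [← Category.assoc, ← hη', hζη, Category.comp_id])
  have hsz := shift_hom_obj₃_eq_zero hK hfq hsE (shift_hom_obj₃_eq_zero hT hσ hsE
    (hS.shift_one_hom_eq_zero_of_mem hs (.ext f g ⟨h, hD⟩ ha hb)))
  have hqz : qz ≫ η ≫ η' = qz := by
    rw [← Category.assoc, ← hη]
    exact eq_of_mor₂_comp_eq hT hsz (by rw [← Category.assoc, hch, Category.assoc, ← hη', hζ])
  have := isIso_of_comp_eq_id hK hfq ha (hS.shift_one_hom_eq_zero ha hcb) η η' hη'η hqz
  exact .ext (f ≫ q) qz ⟨rz, hK⟩ ha (.iso (asIso η).symm hcb)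

theorem hasConesFromS_of_distTriang (ha : ExtClos S a) (hb : ExtClos S b)
    (hD : Triangle.mk f g h ∈ distTriang C) (hA : HasConesFromS S a) (hB : HasConesFromS S b) :
    HasConesFromS S y := by
  intro s c hs σ q r hσ hT
  by_cases hσg : σ ≫ g = 0
  · exact hS.extClos_cone_of_comp_eq_zero hs ha hb hD hA hσ hT hσg
  · exact hS.extClos_cone_of_comp_ne_zero hs ha hb hD hB hσ hT hσg

theorem hasConesFromS {y : C} (hy : ExtClos S y) : HasConesFromS S y := by
  induction hy with
  | @of t ht =>
    intro s c hs σ q r hσ hT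
    have hσ0 := hσ.ne_zero (.of hs) (hS.id_ne_zero s hs)
    obtain rfl : s = t := by
      by_contra hne
      exact hσ0 (hS.hom_eq_zero s hs t ht hne σ)
    exact .zero (Triangle.isZero₃_of_isIso₁ _ hT (hS.isIso_of_ne_zero s hs σ hσ0))
  | zero hz =>
    intro s c hs σ q r hσ hT
    exact absurd (hz.eq_of_tgt σ 0) (hσ.ne_zero (.of hs) (hS.id_ne_zero s hs))
  | sum hx hy ihx ihy =>
    exact hS.hasConesFromS_of_distTriang (f := biprod.inl) (g := biprod.snd) (h := 0) hx hy
      (binaryBiproductTriangle_distinguished _ _) ihx ihy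
  | iso e _ ih => exact ih.of_iso e
  | ext f g hT ha hb iha ihb =>
    obtain ⟨h, hT⟩ := hT
    exact hS.hasConesFromS_of_distTriang ha hb hT iha ihb

variable {T F : C → Prop} (hTF : IsTorsionPair (ExtClos S) T F)
include hTF

theorem torsion_of_quotient {x c : C} (hx : T x) (hc : ExtClos S c) (q : x ⟶ c)
    (hq : ∀ ⦃z : C⦄, ExtClos S z → ∀ ξ : c ⟶ z, q ≫ ξ = 0 → ξ = 0) : T c := by
  obtain ⟨tc, fc, i, p, htc, hfc, h, hT⟩ := hTF.exists_seq c hc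
  have hp : p = 0 := hq (hTF.f_sub _ hfc) p (hTF.hom_zero _ _ hx hfc _)
  have hfc0 : IsZero fc := (IsZero.iff_id_eq_zero _).2 <|
    eq_of_mor₂_comp_eq hT (hS.shift_one_hom_eq_zero (hTF.t_sub _ htc) (hTF.f_sub _ hfc))
      (by rw [hp, zero_comp, zero_comp])
  have : IsIso i := (Triangle.isZero₃_iff_isIso₁ _ hT).1 hfc0
  exact hTF.t_iso (asIso i) htc

theorem eq_zero_of_isCover {u v s : C} {τ : u ⟶ v} (hτ : IsCover (ShiftClos (-1) T) τ)
    (hu : T (u⟦(1 : ℤ)⟧)) (hs : s ∈ S) {σ : s ⟶ u⟦(1 : ℤ)⟧} (hσ : IsMonoAgainst (ExtClos S) σ)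
    (hστ : σ ≫ τ⟦(1 : ℤ)⟧' = 0) : σ = 0 := by
  obtain ⟨c, q, r, hT⟩ := distinguished_cocone_triangle σ
  have hc : ExtClos S c := hS.hasConesFromS (hTF.t_sub _ hu) hs σ q r hσ hT
  have hcT : T c := hS.torsion_of_quotient hTF hu hc q fun _ hz _ hξ =>
    eq_of_mor₂_comp_eq hT (hS.shift_one_hom_eq_zero_of_mem hs hz) (by rw [hξ, comp_zero])
  obtain ⟨ε, hε⟩ := yoneda_exact₂_mk hT (τ⟦(1 : ℤ)⟧') hστ
  have := isSplitMono_of_isCover hτ hcT q ε hε.symm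
  exact zero_of_comp_mono q (comp_distTriang_mk_zero₁₂ hT)

theorem isMonoAgainst_comp_of_simple (hTsub : ClosedUnderSubobjects (ExtClos S) T)
    {f g t' f' : C} (hf : ExtClos S f) (hfF : F f)
    [Simple (⟨f, hf⟩ : ObjectProperty.FullSubcategory (ExtClos S))] {φ : f ⟶ g}
    (hφ : IsMonoAgainst (ExtClos S) φ) {i : t' ⟶ g} {p : g ⟶ f'} {h : f' ⟶ t'⟦(1 : ℤ)⟧}
    (hT : Triangle.mk i p h ∈ distTriang C) (ht' : T t') (hf' : F f') :
    IsMonoAgainst (ExtClos S) (φ ≫ p) := by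
  by_cases hφp : φ ≫ p = 0
  · obtain ⟨ψ, rfl⟩ := coyoneda_exact₂_mk hT φ hφp
    have : Mono (ObjectProperty.homMk ψ :
        (⟨f, hf⟩ : ObjectProperty.FullSubcategory (ExtClos S)) ⟶ ⟨t', hTF.t_sub _ ht'⟩) :=
      mono_of_isMonoAgainst _ hφ.of_comp
    have hfT : T f := hTsub _ _ _ this ht'
    exact absurd (ObjectProperty.hom_ext _ (hTF.hom_zero _ _ hfT hfF (𝟙 f)))
      (id_nonzero (⟨f, hf⟩ : ObjectProperty.FullSubcategory (ExtClos S)))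
  · obtain ⟨s, hs, ⟨e⟩⟩ := hS.exists_iso_of_simple hf
    have hs0 : e.hom ≫ φ ≫ p ≠ 0 := fun h0 => hφp (by simpa using congrArg (e.inv ≫ ·) h0)
    simpa using (isMonoAgainst_of_mono e.inv).comp
      (hS.isMonoAgainst_of_ne_zero hs (hTF.f_sub _ hf') _ hs0)

end IsOrthogonalCollection

end OrthogonalCollection

/-- Let `S` be a `2`-orthogonal collection and `(T, F)` a torsion
pair in the abelian category `⟨S⟩` with `T` closed under subobjects in `⟨S⟩`.  Suppose
`f ∈ F` is a simple object of `⟨S⟩` and there is a distinguished triangle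
`Σ⁻¹t ⟶ f ⟶ g ⟶ t` whose first map `τ` is a `(Σ⁻¹T)`-cover.  Then `g ∈ F`. -/
theorem statement14 {k : Type} [Field k] [Linear k C]
    [EssentiallySmall.{v} C] [IsIdempotentComplete C]
    [∀ x y : C, FiniteDimensional k (x ⟶ y)]
    (S : Set C) (hS : IsOrthogonalCollection 2 S)
    (T F : C → Prop) (hTF : IsTorsionPair (ExtClos S) T F)
    (hTsub : ClosedUnderSubobjects (ExtClos S) T)
    (f : C) (hf : ExtClos S f) (hfF : F f)
    (hsimple : Simple (⟨f, hf⟩ : ObjectProperty.FullSubcategory (ExtClos S)))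
    (u g : C) (τ : u ⟶ f) (φ : f ⟶ g) (δ : g ⟶ u⟦(1 : ℤ)⟧)
    (hdt : Triangle.mk τ φ δ ∈ distTriang C)
    (hcover : IsCover (ShiftClos (-1) T) τ) :
    F g := by
  obtain ⟨t, ht, ⟨eu⟩⟩ := hcover.1.1
  have hu : T (u⟦(1 : ℤ)⟧) := hTF.t_iso ((shiftFunctor C (1 : ℤ)).mapIso eu ≪≫
    (shiftFunctorCompIsoId C (-1 : ℤ) 1 (by omega)).app t).symm ht
  have hdt' := rot_of_distTriang _ hdt
  have hφ : IsMonoAgainst (ExtClos S) φ := hS.isMonoAgainst_mor₁ hdt' (hTF.t_sub _ hu)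
  have hgE : ExtClos S g := .ext φ δ ⟨_, hdt'⟩ hf (hTF.t_sub _ hu)
  obtain ⟨t', f', i, p, ht', hf', h, hT⟩ := hTF.exists_seq g hgE
  have hφp := hS.isMonoAgainst_comp_of_simple hTF hTsub hf hfF hφ hT ht' hf'
  have hi : IsMonoAgainst (ExtClos S) i := hS.isMonoAgainst_mor₁ hT (hTF.f_sub _ hf')
  have ht'0 : IsZero t' := by
    by_contra ht'0
    obtain ⟨s, hs, μ, hμ⟩ := hS.exists_isMonoAgainst (hTF.t_sub _ ht') ht'0
    have hσ : IsMonoAgainst (ExtClos S) (μ ≫ i ≫ δ) :=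
      hμ.comp (hi.comp_mor₂ hdt' hφp (comp_distTriang_mk_zero₁₂ hT))
    refine hσ.ne_zero (.of hs) (hS.id_ne_zero s hs) (hS.eq_zero_of_isCover hTF hcover hu hs hσ ?_)
    rw [Category.assoc, Category.assoc, comp_distTriang_mk_zero₃₁ hdt, comp_zero, comp_zero]
  have : IsIso p := (Triangle.isZero₁_iff_isIso₂ _ hT).1 ht'0
  exact hTF.f_iso (asIso p).symm hf'
end

section
/- Let w ≥ 2 be an integer, let 𝒞 be (−w)-Calabi–Yau, let S be a w-orthogonal collection in 𝒞, and let S', S'' ⊆ S be subsets such that each s ∈ S ∖ S' has a (Σ^{-1}⟨S'⟩)-cover and each s ∈ S ∖ S'' has a (Σ⟨S''⟩)-envelope, so that the left tilt L_{S'}(S) and the right tilt R_{S''}(S) are defined. Then: (i) the right tilt R_{Σ^{-1}S'}(L_{S'}(S)) is defined and equals S up to isomorphism of objects; (ii) the left tilt L_{ΣS''}(R_{S''}(S)) is defined and equals S up to isomorphism of objects. -/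
/-!
Common setup: `k` is a field, `C` an essentially small `k`-linear Hom-finite
triangulated category with split idempotents; `Σ` (suspension) is the shift by `1`.
-/

open CategoryTheory CategoryTheory.Limits CategoryTheory.Pretriangulated

universe v u

variable {C : Type u} [Category.{v} C] [Preadditive C] [HasZeroObject C]
  [HasShift C ℤ] [∀ n : ℤ, (shiftFunctor C n).Additive] [Pretriangulated C]
  [HasBinaryBiproducts C]

/-!
For `s ∈ S ∖ S'` with defining triangle `Σ⁻¹t_s → s → L(s) → t_s`, the same triangle exhibits
`s` as the right tilt of `L(s)` at `Σ⁻¹S'`. The map `L(s) → t_s` is a `Σ⟨Σ⁻¹S'⟩`-preenvelope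
because `Hom(s, ⟨S'⟩) = 0`, and it is left minimal because `End(s)` is a skew field and
`s → L(s)` is nonzero: otherwise `𝟙 s` would factor through `Σ⁻¹⟨S'⟩`, and `Hom(s, Σ⁻¹⟨S'⟩) = 0`
as `w ≥ 2`. For the same reason `L(s) ∉ Σ⁻¹S'`. Since envelopes, and hence right tilts, are
unique up to isomorphism, any choice of right tilt returns `S`. Part (ii) is dual.
-/

set_option linter.unusedSectionVars false

lemma isIso_of_isIso_comp_of_isIso_comp {D : Type*} [Category D] {x y : D} {f : x ⟶ y}
    {g : y ⟶ x} (hfg : IsIso (f ≫ g)) (hgf : IsIso (g ≫ f)) : IsIso f := by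
  have : Mono f := mono_of_mono f g
  have : IsSplitEpi f := IsSplitEpi.mk' ⟨inv (g ≫ f) ≫ g, by simp⟩
  exact isIso_of_mono_of_isSplitEpi f

lemma exists_inverse_of_nonempty_iso {D : Type*} [Category D] {P : D → D → Prop}
    (hP : ∀ {t r₁ r₂}, P t r₁ → P t r₂ → Nonempty (r₁ ≅ r₂)) {S : Set D} {F : D → D}
    (hF : ∀ s ∈ S, ∃ r, P (F s) r ∧ Nonempty (r ≅ s)) :
    ∃ G : D → D, (∀ t ∈ F '' S, P t (G t)) ∧ ∀ s ∈ S, Nonempty (G (F s) ≅ s) := by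
  classical
  let G : D → D := fun t => if h : ∃ r, P t r then h.choose else t
  have hG : ∀ {t r}, P t r → P t (G t) := fun {t r} h => by
    simpa only [G, dif_pos (⟨_, h⟩ : ∃ r, P t r)] using (⟨_, h⟩ : ∃ r, P t r).choose_spec
  refine ⟨G, ?_, fun s hs => ?_⟩
  · rintro _ ⟨s, hs, rfl⟩
    obtain ⟨r, hr, -⟩ := hF s hs
    exact hG hr
  · obtain ⟨r, hr, ⟨e⟩⟩ := hF s hs
    obtain ⟨e'⟩ := hP (hG hr) hr
    exact ⟨e' ≪≫ e⟩

namespace ExtClos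

lemma image_shift {X : Set C} (n : ℤ) {x : C} (hx : ExtClos X x) :
    ExtClos ((fun s : C => s⟦n⟧) '' X) (x⟦n⟧) := by
  induction hx with
  | of hs => exact .of ⟨_, hs, rfl⟩
  | zero hz => exact .zero ((shiftFunctor C n).map_isZero hz)
  | sum _ _ ihx ihy =>
      have : PreservesBinaryBiproducts (shiftFunctor C n) :=
        preservesBinaryBiproducts_of_preservesBiproducts _
      exact .iso ((shiftFunctor C n).mapBiprod _ _).symm (.sum ihx ihy)
  | iso e _ ih => exact .iso ((shiftFunctor C n).mapIso e) ih
  | ext f g hT _ _ iha ihb =>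
      obtain ⟨h, hT⟩ := hT
      exact .ext _ _ ⟨_, Triangle.shift_distinguished _ hT n⟩ iha ihb

lemma of_forall_extClos {X Y : Set C} (hXY : ∀ x ∈ X, ExtClos Y x) {z : C}
    (hz : ExtClos X z) : ExtClos Y z := by
  induction hz with
  | of hs => exact hXY _ hs
  | zero hz => exact .zero hz
  | sum _ _ ihx ihy => exact .sum ihx ihy
  | iso e _ ih => exact .iso e ih
  | ext f g hT _ _ iha ihb => exact .ext f g hT iha ihb

lemma of_image_shift_image_shift {X : Set C} {m n : ℤ} (hmn : n + m = 0) {z : C}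
    (hz : ExtClos ((fun s : C => s⟦m⟧) '' ((fun s : C => s⟦n⟧) '' X)) z) : ExtClos X z :=
  hz.of_forall_extClos <| by
    rintro _ ⟨_, ⟨x, hx, rfl⟩, rfl⟩
    exact .iso ((shiftFunctorCompIsoId C n m hmn).app x).symm (.of hx)

lemma hom_to_eq_zero {X : Set C} {a : C} (hX : ∀ x ∈ X, ∀ f : a ⟶ x, f = 0) {y : C}
    (hy : ExtClos X y) (f : a ⟶ y) : f = 0 := by
  induction hy with
  | of hs => exact hX _ hs f
  | zero hz => exact hz.eq_of_tgt f 0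
  | sum _ _ ihx ihy =>
      apply biprod.hom_ext
      · rw [ihx (f ≫ biprod.fst), zero_comp]
      · rw [ihy (f ≫ biprod.snd), zero_comp]
  | iso e _ ih =>
      have h := ih (f ≫ e.inv)
      rwa [Iso.comp_inv_eq, zero_comp] at h
  | ext f₁ g₁ hT _ _ iha ihb =>
      obtain ⟨h₁, hT⟩ := hT
      obtain ⟨f', hf'⟩ : ∃ f' : a ⟶ _, f = f' ≫ f₁ :=
        Triangle.coyoneda_exact₂ _ hT f (ihb (f ≫ g₁))
      rw [hf', iha f', zero_comp]

lemma hom_from_eq_zero {X : Set C} {a : C} (hX : ∀ x ∈ X, ∀ f : x ⟶ a, f = 0) {y : C}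
    (hy : ExtClos X y) (f : y ⟶ a) : f = 0 := by
  induction hy with
  | of hs => exact hX _ hs f
  | zero hz => exact hz.eq_of_src f 0
  | sum _ _ ihx ihy =>
      apply biprod.hom_ext'
      · rw [ihx (biprod.inl ≫ f), comp_zero]
      · rw [ihy (biprod.inr ≫ f), comp_zero]
  | iso e _ ih =>
      have h := ih (e.hom ≫ f)
      rwa [← Iso.eq_inv_comp, comp_zero] at h
  | ext f₁ g₁ hT _ _ iha ihb =>
      obtain ⟨h₁, hT⟩ := hT
      obtain ⟨f', hf'⟩ : ∃ f' : _ ⟶ a, f = g₁ ≫ f' :=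
        Triangle.yoneda_exact₂ _ hT f (iha (f₁ ≫ f))
      rw [hf', ihb f', comp_zero]

end ExtClos

lemma ShiftClos.extClos_image_shift {n : ℤ} {X : Set C} {y : C}
    (hy : ShiftClos n (ExtClos X) y) : ExtClos ((fun s : C => s⟦n⟧) '' X) y := by
  obtain ⟨x, hx, ⟨e⟩⟩ := hy
  exact .iso e.symm (hx.image_shift n)

lemma IsEnvelope.exists_iso {X : C → Prop} {c e₁ e₂ : C} {γ₁ : c ⟶ e₁} {γ₂ : c ⟶ e₂}
    (h₁ : IsEnvelope X γ₁) (h₂ : IsEnvelope X γ₂) : ∃ e : e₁ ≅ e₂, γ₁ ≫ e.hom = γ₂ := by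
  obtain ⟨α, hα⟩ := h₁.1.2 _ h₂.1.1 γ₂
  obtain ⟨β, hβ⟩ := h₂.1.2 _ h₁.1.1 γ₁
  have : IsIso α := isIso_of_isIso_comp_of_isIso_comp
    (h₁.2 _ (by rw [← Category.assoc, hα, hβ])) (h₂.2 _ (by rw [← Category.assoc, hβ, hα]))
  exact ⟨asIso α, hα⟩

lemma IsCover.exists_iso {X : C → Prop} {c x₁ x₂ : C} {τ₁ : x₁ ⟶ c} {τ₂ : x₂ ⟶ c}
    (h₁ : IsCover X τ₁) (h₂ : IsCover X τ₂) : ∃ e : x₁ ≅ x₂, e.hom ≫ τ₂ = τ₁ := by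
  obtain ⟨α, hα⟩ := h₂.1.2 _ h₁.1.1 τ₁
  obtain ⟨β, hβ⟩ := h₁.1.2 _ h₂.1.1 τ₂
  have : IsIso α := isIso_of_isIso_comp_of_isIso_comp
    (h₁.2 _ (by rw [Category.assoc, hβ, hα])) (h₂.2 _ (by rw [Category.assoc, hα, hβ]))
  exact ⟨asIso α, hα⟩

lemma LeftTiltPair.nonempty_iso {X : Set C} {s t₁ t₂ : C} (h₁ : LeftTiltPair X s t₁)
    (h₂ : LeftTiltPair X s t₂) : Nonempty (t₁ ≅ t₂) := by
  rcases h₁ with ⟨hs, rfl⟩ | ⟨hs, u₁, τ₁, g₁, h₁, hτ₁, hT₁⟩ <;>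
    rcases h₂ with ⟨hs', rfl⟩ | ⟨hs', u₂, τ₂, g₂, h₂, hτ₂, hT₂⟩
  · exact ⟨Iso.refl _⟩
  · exact absurd hs hs'
  · exact absurd hs' hs
  · obtain ⟨e, he⟩ := hτ₁.exists_iso hτ₂
    exact ⟨Triangle.π₃.mapIso
      (isoTriangleOfIso₁₂ _ _ hT₁ hT₂ e (Iso.refl s) ((Category.comp_id _).trans he.symm))⟩

lemma RightTiltPair.nonempty_iso {X : Set C} {s t₁ t₂ : C} (h₁ : RightTiltPair X s t₁)
    (h₂ : RightTiltPair X s t₂) : Nonempty (t₁ ≅ t₂) := by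
  rcases h₁ with ⟨hs, rfl⟩ | ⟨hs, g₁, a₁, b₁, γ₁, hγ₁, hT₁⟩ <;>
    rcases h₂ with ⟨hs', rfl⟩ | ⟨hs', g₂, a₂, b₂, γ₂, hγ₂, hT₂⟩
  · exact ⟨Iso.refl _⟩
  · exact absurd hs hs'
  · exact absurd hs' hs
  · obtain ⟨e, he⟩ := hγ₁.exists_iso hγ₂
    let e₁ : g₁ ≅ g₂ := (shiftFunctor C (1 : ℤ)).preimageIso e
    have he₁ : γ₁ ≫ e₁.hom⟦(1 : ℤ)⟧' = (Iso.refl s).hom ≫ γ₂ := by simpa [e₁] using he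
    exact ⟨Triangle.π₂.mapIso (isoTriangleOfIso₁₃ _ _ hT₁ hT₂ e₁ (Iso.refl s) he₁)⟩

namespace IsOrthogonalCollection

variable {w : ℤ} {S S' S'' : Set C} {s : C}

lemma hom_to_extClos_eq_zero (hS : IsOrthogonalCollection w S) (hS' : S' ⊆ S)
    (hs : s ∈ S) (hsS' : s ∉ S') {y : C} (hy : ExtClos S' y) (f : s ⟶ y) : f = 0 :=
  hy.hom_to_eq_zero (fun t ht => hS.hom_eq_zero s hs t (hS' ht) fun h => hsS' (h ▸ ht)) f

lemma hom_from_extClos_eq_zero (hS : IsOrthogonalCollection w S) (hS' : S' ⊆ S)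
    (hs : s ∈ S) (hsS' : s ∉ S') {y : C} (hy : ExtClos S' y) (f : y ⟶ s) : f = 0 :=
  hy.hom_from_eq_zero (fun t ht => hS.hom_eq_zero t (hS' ht) s hs fun h => hsS' (h ▸ ht)) f

lemma hom_to_extClos_shift_neg_eq_zero (hS : IsOrthogonalCollection w S)
    (hS' : S' ⊆ S) (hs : s ∈ S) (hw : 2 ≤ w) {y : C}
    (hy : ExtClos ((fun t : C => t⟦(-1 : ℤ)⟧) '' S') y) (f : s ⟶ y) : f = 0 := by
  refine hy.hom_to_eq_zero ?_ f
  rintro _ ⟨t, ht, rfl⟩ f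
  exact hS.shift_hom_eq_zero s hs t (hS' ht) (-1) (by omega) le_rfl f

lemma hom_from_extClos_shift_eq_zero (hS : IsOrthogonalCollection w S)
    (hS' : S' ⊆ S) (hs : s ∈ S) (hw : 2 ≤ w) {y : C}
    (hy : ExtClos ((fun t : C => t⟦(1 : ℤ)⟧) '' S') y) (f : y ⟶ s) : f = 0 := by
  refine hy.hom_from_eq_zero ?_ f
  rintro _ ⟨t, ht, rfl⟩ f
  let e := (shiftFunctorCompIsoId C (1 : ℤ) (-1) (by omega)).app t
  have : e.inv ≫ f⟦(-1 : ℤ)⟧' = 0 :=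
    hS.shift_hom_eq_zero t (hS' ht) s hs (-1) (by omega) le_rfl _
  rwa [Iso.inv_comp_eq, comp_zero, Functor.map_eq_zero_iff] at this

lemma rightTiltPair_of_isCover (hS : IsOrthogonalCollection w S) (hw : 2 ≤ w)
    (hS' : S' ⊆ S) (hs : s ∈ S) (hsS' : s ∉ S') {u t : C} {τ : u ⟶ s} {g : s ⟶ t}
    {h : t ⟶ u⟦(1 : ℤ)⟧} (hτ : IsCover (ShiftClos (-1) (ExtClos S')) τ)
    (hT : Triangle.mk τ g h ∈ distTriang C) :
    RightTiltPair ((fun x : C => x⟦(-1 : ℤ)⟧) '' S') t s := by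
  have hu := hτ.1.1.extClos_image_shift
  have hg : g ≠ 0 := by
    intro hg
    obtain ⟨σ, hσ⟩ : ∃ σ : s ⟶ u, 𝟙 s = σ ≫ τ :=
      Triangle.coyoneda_exact₂ _ hT (𝟙 s) ((Category.id_comp g).trans hg)
    exact hS.id_ne_zero s hs <| by
      rw [hσ, hS.hom_to_extClos_shift_neg_eq_zero hS' hs hw hu σ, zero_comp]
  refine .inr ⟨?_, u, τ, g, h, ⟨⟨⟨u, hu, ⟨Iso.refl _⟩⟩, fun e he f => ?_⟩, fun φ hφ => ?_⟩, hT⟩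
  · rintro ⟨t, ht, rfl⟩
    exact hg (hS.hom_to_extClos_shift_neg_eq_zero hS' hs hw (.of ⟨t, ht, rfl⟩) g)
  · have he' : ExtClos S' e := he.extClos_image_shift.of_image_shift_image_shift (by omega)
    obtain ⟨φ, hφ⟩ := Triangle.yoneda_exact₃ _ hT f
      (hS.hom_to_extClos_eq_zero hS' hs hsS' he' (g ≫ f))
    exact ⟨φ, hφ.symm⟩
  · let ψ := (shiftFunctor C (1 : ℤ)).preimage φ
    have hψ : h ≫ ψ⟦(1 : ℤ)⟧' = 𝟙 t ≫ h := by
      rw [Functor.map_preimage, Category.id_comp, hφ]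
    obtain ⟨b, hb₁, hb₂⟩ : ∃ b : s ⟶ s, τ ≫ b = ψ ≫ τ ∧ g ≫ 𝟙 t = b ≫ g :=
      complete_distinguished_triangle_morphism₂ _ _ hT hT ψ (𝟙 t) hψ
    have hb : IsIso b := hS.isIso_of_ne_zero s hs b fun hb => hg <| by
      rw [← Category.comp_id g, hb₂, hb, zero_comp]
    have : IsIso ψ := isIso₁_of_isIso₂₃ ⟨ψ, b, 𝟙 t, hb₁, hb₂, hψ⟩ hT hT
      hb (IsIso.id t)
    rw [← (shiftFunctor C (1 : ℤ)).map_preimage φ]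
    infer_instance

lemma leftTiltPair_of_isEnvelope (hS : IsOrthogonalCollection w S) (hw : 2 ≤ w)
    (hS'' : S'' ⊆ S) (hs : s ∈ S) (hsS'' : s ∉ S'') {u t : C} {a : u ⟶ t} {b : t ⟶ s}
    {γ : s ⟶ u⟦(1 : ℤ)⟧} (hγ : IsEnvelope (ShiftClos 1 (ExtClos S'')) γ)
    (hT : Triangle.mk a b γ ∈ distTriang C) :
    LeftTiltPair ((fun x : C => x⟦(1 : ℤ)⟧) '' S'') t s := by
  have hu := hγ.1.1.extClos_image_shift
  have hb : b ≠ 0 := by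
    intro hb
    obtain ⟨r, hr⟩ : ∃ r : u⟦(1 : ℤ)⟧ ⟶ s, 𝟙 s = γ ≫ r :=
      Triangle.yoneda_exact₃ _ hT (𝟙 s) ((Category.comp_id b).trans hb)
    exact hS.id_ne_zero s hs <| by
      rw [hr, hS.hom_from_extClos_shift_eq_zero hS'' hs hw hu r, comp_zero]
  refine .inr ⟨?_, u, a, b, γ, ⟨⟨⟨u⟦(1 : ℤ)⟧, hu,
    ⟨((shiftFunctorCompIsoId C (1 : ℤ) (-1) (by omega)).app u).symm⟩⟩, fun v hv f => ?_⟩,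
    fun φ hφ => ?_⟩, hT⟩
  · rintro ⟨t, ht, rfl⟩
    exact hb (hS.hom_from_extClos_shift_eq_zero hS'' hs hw (.of ⟨t, ht, rfl⟩) b)
  · have hv' : ExtClos S'' v := hv.extClos_image_shift.of_image_shift_image_shift (by omega)
    obtain ⟨φ, hφ⟩ := Triangle.coyoneda_exact₂ _ hT f
      (hS.hom_from_extClos_eq_zero hS'' hs hsS'' hv' (f ≫ b))
    exact ⟨φ, hφ.symm⟩
  · have hφ' : a ≫ 𝟙 t = φ ≫ a := (Category.comp_id a).trans hφ.symm
    obtain ⟨c, hc₁, hc₂⟩ : ∃ c : s ⟶ s, b ≫ c = 𝟙 t ≫ b ∧ γ ≫ φ⟦(1 : ℤ)⟧' = c ≫ γ :=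
      complete_distinguished_triangle_morphism _ _ hT hT φ (𝟙 t) hφ'
    have hc : IsIso c := hS.isIso_of_ne_zero s hs c fun hc => hb <| by
      rw [← Category.id_comp b, ← hc₁, hc, comp_zero]
    exact isIso₁_of_isIso₂₃ ⟨φ, 𝟙 t, c, hφ', hc₁, hc₂⟩ hT hT (IsIso.id t) hc

lemma exists_rightTilt_leftTilt (hS : IsOrthogonalCollection w S) (hw : 2 ≤ w)
    (hS' : S' ⊆ S) {L : C → C} (hL : IsLeftTilt S' S L) :
    ∃ R' : C → C, IsRightTilt ((fun s : C => s⟦(-1 : ℤ)⟧) '' S') (L '' S) R' ∧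
      ∀ s ∈ S, Nonempty (R' (L s) ≅ s) := by
  refine exists_inverse_of_nonempty_iso (P := RightTiltPair _) RightTiltPair.nonempty_iso
    fun s hs => ?_
  rcases hL s hs with ⟨hsS', hLs⟩ | ⟨hsS', u, τ, g, h, hτ, hT⟩
  · refine ⟨(L s)⟦(1 : ℤ)⟧, .inl ⟨⟨s, hsS', hLs.symm⟩, rfl⟩, ⟨?_⟩⟩
    rw [hLs]
    exact (shiftFunctorCompIsoId C (-1 : ℤ) 1 (by omega)).app s
  · exact ⟨s, hS.rightTiltPair_of_isCover hw hS' hs hsS' hτ hT, ⟨Iso.refl s⟩⟩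

lemma exists_leftTilt_rightTilt (hS : IsOrthogonalCollection w S) (hw : 2 ≤ w)
    (hS'' : S'' ⊆ S) {R : C → C} (hR : IsRightTilt S'' S R) :
    ∃ L' : C → C, IsLeftTilt ((fun s : C => s⟦(1 : ℤ)⟧) '' S'') (R '' S) L' ∧
      ∀ s ∈ S, Nonempty (L' (R s) ≅ s) := by
  refine exists_inverse_of_nonempty_iso (P := LeftTiltPair _) LeftTiltPair.nonempty_iso
    fun s hs => ?_
  rcases hR s hs with ⟨hsS'', hRs⟩ | ⟨hsS'', u, a, b, γ, hγ, hT⟩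
  · refine ⟨(R s)⟦(-1 : ℤ)⟧, .inl ⟨⟨s, hsS'', hRs.symm⟩, rfl⟩, ⟨?_⟩⟩
    rw [hRs]
    exact (shiftFunctorCompIsoId C (1 : ℤ) (-1) (by omega)).app s
  · exact ⟨s, hS.leftTiltPair_of_isEnvelope hw hS'' hs hsS'' hγ hT, ⟨Iso.refl s⟩⟩

end IsOrthogonalCollection

/-- Let `w ≥ 2`, let `C` be `(-w)`-Calabi--Yau, `S` a `w`-orthogonal
collection, and `S', S'' ⊆ S` such that the left tilt `L_{S'}(S)` and the right tilt
`R_{S''}(S)` are defined (realised by the functions `L` and `R`).  Then (i) the right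
tilt `R_{Σ⁻¹S'}(L_{S'}(S))` is defined and equals `S` up to isomorphism of objects,
and (ii) the left tilt `L_{ΣS''}(R_{S''}(S))` is defined and equals `S` up to
isomorphism of objects. -/
theorem statement19 {k : Type} [Field k] [Linear k C]
    [EssentiallySmall.{v} C] [IsIdempotentComplete C]
    [∀ x y : C, FiniteDimensional k (x ⟶ y)]
    (w : ℕ) (hw : 2 ≤ w) (hCY : IsNegativeCalabiYau k C (w : ℤ))
    (S : Set C) (hS : IsOrthogonalCollection (w : ℤ) S)
    (S' S'' : Set C) (hsub' : S' ⊆ S) (hsub'' : S'' ⊆ S)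
    (L : C → C) (hL : IsLeftTilt S' S L)
    (R : C → C) (hR : IsRightTilt S'' S R) :
    (∃ R' : C → C, IsRightTilt ((fun s : C => s⟦(-1 : ℤ)⟧) '' S') (L '' S) R' ∧
      ∀ s ∈ S, Nonempty (R' (L s) ≅ s)) ∧
    (∃ L' : C → C, IsLeftTilt ((fun s : C => s⟦(1 : ℤ)⟧) '' S'') (R '' S) L' ∧
      ∀ s ∈ S, Nonempty (L' (R s) ≅ s)) :=
  ⟨hS.exists_rightTilt_leftTilt (by omega) hsub' hL,
    hS.exists_leftTilt_rightTilt (by omega) hsub'' hR⟩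
end
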